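/- arXiv:2504.19901 — 9 statements merged into one kernel-verified Lean document; each statement's English description precedes it below -/
import Mathlib

section
/- Let 𝒳 ⊆ ℝ^d, let MaxAff(x) = max_{i∈[N]}(a_iᵀx + b_i) be a max-affine function with N ≥ n components, and let Δ > 0. For x ∈ ℝ^d admitting a unique index j(x) ∈ [N] with a_{j(x)}ᵀx + b_{j(x)} ≥ a_jᵀx + b_j + Δ for all j ≠ j(x), let E(x) ∈ ℝ^N be the one-hot vector with 1 in position j(x). Then for every ε > 0 there exist a sum-of-linear-transformations layer Linear : ℝ^{d×n} → ℝ^{(d+N)×N} and matrices W_K, W_Q (of suitable dimensions) and W_O ∈ ℝ^{N×n} such that for every X = [X_1,…,X_n] ∈ ℝ^{d×n} whose columns all lie in 𝒳 and all satisfy the Δ-margin condition above, ‖Softmax((W_K·Linear(X))ᵀ · W_Q·Linear(X)) · W_O − [E(X_1), E(X_2), …, E(X_n)]‖_∞ ≤ ε. -/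
open Matrix

/-- Column-wise softmax of a real matrix. -/
noncomputable def softmax {a b : ℕ} (M : Matrix (Fin a) (Fin b) ℝ) :
    Matrix (Fin a) (Fin b) ℝ :=
  Matrix.of fun i j => Real.exp (M i j) / ∑ k, Real.exp (M k j)

/-!
Place column `c` of the input at token position `f c`, where `f : Fin n ↪ Fin N`, and append
to every token `j` the one-hot code `e_j`; this is a single linear layer. A key matrix reading
only the one-hot part sends token `r` to `t • (a_r, b_r, …, b_r)`, and the queries are the
tokens themselves, so the attention score of `(r, f c)` is `t (a_r ⬝ X_c + b_r)`. A margin `Δ`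
in these scores makes the column softmax `N e^{-tΔ}`-close to the one-hot vector at `j(X_c)`,
which is at most `ε` for large `t`; finally `W_O` picks out the columns `f c`.
-/

open Real Finset Filter Topology

section ExpWeights

variable {ι : Type*} [Fintype ι] {s : ι → ℝ} {δ : ℝ}

lemma exp_div_sum_exp_le_exp_neg {i j : ι} (h : s i + δ ≤ s j) :
    exp (s i) / ∑ k, exp (s k) ≤ exp (-δ) := by
  have hj : exp (s j) ≤ ∑ k, exp (s k) :=
    single_le_sum (fun k _ => (exp_pos (s k)).le) (mem_univ j)
  calc exp (s i) / ∑ k, exp (s k) ≤ exp (s i) / exp (s j) := by gcongr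
    _ ≤ exp (-δ) := by rw [← exp_sub]; gcongr; linarith

lemma sum_exp_div_sum_exp [Nonempty ι] : ∑ i, exp (s i) / ∑ k, exp (s k) = 1 := by
  rw [← Finset.sum_div, div_self]
  exact (sum_pos (fun k _ => exp_pos (s k)) univ_nonempty).ne'

lemma abs_exp_div_sum_exp_sub_ite_le [DecidableEq ι] {j : ι}
    (h : ∀ k, k ≠ j → s k + δ ≤ s j) (i : ι) :
    |exp (s i) / ∑ k, exp (s k) - if i = j then 1 else 0| ≤ Fintype.card ι * exp (-δ) := by
  have : Nonempty ι := ⟨j⟩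
  set p : ι → ℝ := fun i => exp (s i) / ∑ k, exp (s k)
  have hp_nonneg (i : ι) : 0 ≤ p i := by positivity
  have hp_le (k : ι) (hk : k ≠ j) : p k ≤ exp (-δ) := exp_div_sum_exp_le_exp_neg (h k hk)
  have hcard : (1 : ℝ) ≤ Fintype.card ι := by exact_mod_cast Fintype.card_pos
  show |p i - _| ≤ _
  split_ifs with hij
  · subst hij
    have hsum : 1 - p i = ∑ k ∈ univ.erase i, p k := by
      rw [← sum_exp_div_sum_exp (s := s), ← add_sum_erase _ _ (mem_univ i)]
      ring
    have hnonneg : 0 ≤ 1 - p i := hsum ▸ sum_nonneg fun k _ => hp_nonneg k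
    rw [abs_sub_comm, abs_of_nonneg hnonneg, hsum]
    calc ∑ k ∈ univ.erase i, p k ≤ #(univ.erase i) • exp (-δ) :=
          sum_le_card_nsmul _ _ _ fun k hk => hp_le k (ne_of_mem_erase hk)
      _ ≤ Fintype.card ι * exp (-δ) := by
          rw [nsmul_eq_mul]
          gcongr
          exact_mod_cast card_erase_le
  · rw [sub_zero, abs_of_nonneg (hp_nonneg i)]
    exact (hp_le i hij).trans (le_mul_of_one_le_left (exp_pos _).le hcard)

end ExpWeights

lemma abs_softmax_sub_ite_le {a b : ℕ} (M : Matrix (Fin a) (Fin b) ℝ) {c : Fin b} {j : Fin a}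
    {δ : ℝ} (h : ∀ k, k ≠ j → M k c + δ ≤ M j c) (i : Fin a) :
    |softmax M i c - if i = j then 1 else 0| ≤ a * exp (-δ) := by
  rw [softmax, of_apply]
  simpa only [Fintype.card_fin] using abs_exp_div_sum_exp_sub_ite_le (s := (M · c)) h i

lemma exists_nonneg_mul_exp_neg_mul_le (C : ℝ) {Δ ε : ℝ} (hΔ : 0 < Δ) (hε : 0 < ε) :
    ∃ t, 0 ≤ t ∧ C * exp (-(t * Δ)) ≤ ε := by
  have hlim : Tendsto (fun t => C * exp (-(t * Δ))) atTop (𝓝 0) := by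
    simpa using (tendsto_exp_neg_atTop_nhds_zero.comp
      (tendsto_id.atTop_mul_const hΔ)).const_mul C
  exact ((eventually_ge_atTop 0).and (hlim.eventually (ge_mem_nhds hε))).exists

section Blocks

variable {R : Type*} [Semiring R] {k l m n p : Type*} [Fintype m] [Fintype p] [DecidableEq p]

omit [Fintype p] [DecidableEq p] in
lemma fromRows_one_zero_mul_add_fromRows_zero [DecidableEq m] (Z : Matrix m n R)
    (B : Matrix p n R) :
    fromRows (1 : Matrix m m R) (0 : Matrix p m R) * Z + fromRows (0 : Matrix m n R) B =
      fromRows Z B := by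
  ext (i | i) j <;> simp [fromRows_mul]

lemma fromCols_mul_fromRows_one (A : Matrix k m R) (B : Matrix k p R) (Y : Matrix m p R) :
    fromCols A B * fromRows Y (1 : Matrix p p R) = A * Y + B := by
  rw [fromCols_mul_fromRows, Matrix.mul_one]

lemma mul_one_submatrix_id (M : Matrix l p R) (f : n → p) :
    M * (1 : Matrix p p R).submatrix id f = M.submatrix id f := by
  simpa using (submatrix_mul M 1 id id f Function.bijective_id).symm

omit [Fintype p] in
lemma mul_one_submatrix_apply [Fintype n] [DecidableEq n] (M : Matrix l n R) {f : n → p}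
    (hf : Function.Injective f) (i : l) (j : n) :
    (M * (1 : Matrix p p R).submatrix f id) i (f j) = M i j := by
  simp [mul_apply, one_apply, hf.eq_iff]

end Blocks

section Attention

variable {R : Type*} [Semiring R] {d n N : ℕ}

variable (R d N) in
def upperInclusion : Matrix (Fin (d + N)) (Fin d) R :=
  (fromRows 1 0).submatrix finSumFinEquiv.symm id

variable (R d N) in
def lowerInclusion : Matrix (Fin (d + N)) (Fin N) R :=
  (fromRows 0 1).submatrix finSumFinEquiv.symm id

def tokenMatrix (Y : Matrix (Fin d) (Fin N) R) : Matrix (Fin (d + N)) (Fin N) R :=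
  (fromRows Y 1).submatrix finSumFinEquiv.symm id

/-- Ignores the `Y`-part of a token `(y, e_r)` of `tokenMatrix Y` and maps it to
`(a_r, b_r, …, b_r)`, whose inner product with any token `(x, e_j)` is `a_r ⬝ x + b_r`. -/
def keyWeights (a : Fin N → Fin d → R) (b : Fin N → R) : Matrix (Fin (d + N)) (Fin (d + N)) R :=
  (fromCols 0 ((fromRows (of a)ᵀ (replicateRow (Fin N) b)).submatrix finSumFinEquiv.symm id)).submatrix
    id finSumFinEquiv.symm

lemma upperInclusion_mul_add_lowerInclusion (Z : Matrix (Fin d) (Fin N) R) :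
    upperInclusion R d N * Z + lowerInclusion R d N = tokenMatrix Z := by
  rw [tokenMatrix, ← fromRows_one_zero_mul_add_fromRows_zero Z 1]
  exact congrArg (· + _) (submatrix_mul _ Z _ id id Function.bijective_id).symm

lemma keyWeights_mul_tokenMatrix_transpose_mul (a : Fin N → Fin d → R) (b : Fin N → R)
    (Y : Matrix (Fin d) (Fin N) R) :
    (keyWeights a b * tokenMatrix Y)ᵀ * tokenMatrix Y = of a * Y + replicateCol (Fin N) b := by
  simp only [keyWeights, tokenMatrix, submatrix_mul_equiv, fromCols_mul_fromRows_one,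
    Matrix.zero_mul, zero_add, submatrix_id_id, transpose_submatrix, transpose_fromRows,
    transpose_transpose, transpose_replicateRow]

lemma smul_keyWeights_attention_apply (a : Fin N → Fin d → R) (b : Fin N → R) (t : R)
    (Y : Matrix (Fin d) (Fin n) R) {f : Fin n → Fin N} (hf : Function.Injective f)
    (k : Fin N) (c : Fin n) :
    ((t • keyWeights a b * tokenMatrix (Y * (1 : Matrix (Fin N) (Fin N) R).submatrix f id))ᵀ *
        ((1 : Matrix (Fin (d + N)) (Fin (d + N)) R) *
          tokenMatrix (Y * (1 : Matrix (Fin N) (Fin N) R).submatrix f id))) k (f c) =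
      t * ((∑ i, a k i * Y i c) + b k) := by
  rw [Matrix.one_mul, smul_mul, transpose_smul, smul_mul,
    keyWeights_mul_tokenMatrix_transpose_mul, ← Matrix.mul_assoc, Matrix.smul_apply,
    Matrix.add_apply, mul_one_submatrix_apply _ hf, replicateCol_apply, smul_eq_mul]
  simp only [mul_apply, of_apply]

end Attention

theorem attention_approximates_maxaffine_indicator_general
    (d n N : ℕ) (hNn : n ≤ N)
    (X : Set (Fin d → ℝ))
    (a : Fin N → Fin d → ℝ) (b : Fin N → ℝ)
    (Δ : ℝ) (hΔ : 0 < Δ) (ε : ℝ) (hε : 0 < ε) :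
    ∃ (H : ℕ) (P : Fin H → Matrix (Fin (d + N)) (Fin d) ℝ)
      (Q : Fin H → Matrix (Fin n) (Fin N) ℝ)
      (Rb : Matrix (Fin (d + N)) (Fin N) ℝ)
      (dA : ℕ) (WK WQ : Matrix (Fin dA) (Fin (d + N)) ℝ)
      (WO : Matrix (Fin N) (Fin n) ℝ),
      ∀ (Xm : Matrix (Fin d) (Fin n) ℝ) (jx : Fin n → Fin N),
        (∀ c : Fin n, (fun r => Xm r c) ∈ X) →
        (∀ c : Fin n, ∀ j : Fin N, j ≠ jx c →
          (∑ t, a (jx c) t * Xm t c) + b (jx c) ≥ ((∑ t, a j t * Xm t c) + b j) + Δ) →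
        ∀ (r : Fin N) (c : Fin n),
          |(softmax ((WK * (∑ i, P i * Xm * Q i + Rb))ᵀ *
              (WQ * (∑ i, P i * Xm * Q i + Rb))) * WO) r c
            - (if r = jx c then (1 : ℝ) else 0)| ≤ ε := by
  obtain ⟨t, ht, hexp⟩ := exists_nonneg_mul_exp_neg_mul_le (N : ℝ) hΔ hε
  set f := Fin.castLE hNn
  set E := (1 : Matrix (Fin N) (Fin N) ℝ).submatrix f id
  refine ⟨1, fun _ => upperInclusion ℝ d N, fun _ => E, lowerInclusion ℝ d N, d + N,
    t • keyWeights a b, 1, Eᵀ, fun Xm jx _ hmargin r c => ?_⟩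
  have hlayer : ∑ _ : Fin 1, upperInclusion ℝ d N * Xm * E + lowerInclusion ℝ d N =
      tokenMatrix (Xm * E) := by
    rw [Fin.sum_univ_one, Matrix.mul_assoc, upperInclusion_mul_add_lowerInclusion]
  have hscore := smul_keyWeights_attention_apply a b t Xm (Fin.castLE_injective hNn) (c := c)
  rw [hlayer, transpose_submatrix, transpose_one, mul_one_submatrix_id, submatrix_apply, id]
  refine (abs_softmax_sub_ite_le _ (δ := t * Δ) (fun k hk => ?_) r).trans hexp
  rw [hscore, hscore]
  nlinarith [hmargin c k hk]

/-- **Attention approximates the indicator of a max-affine partition.**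
Given a max-affine function with `N ≥ n` components on `𝒳 ⊆ ℝ^d` and a margin `Δ > 0`,
for every `ε > 0` there are a sum-of-linear-transformations layer
`Linear : ℝ^{d×n} → ℝ^{(d+N)×N}` (given by `Z ↦ ∑ i, P i * Z * Q i + Rb`),
matrices `W_K, W_Q` (of suitable dimensions) and `W_O ∈ ℝ^{N×n}`
such that for every input `X ∈ ℝ^{d×n}` whose columns lie in `𝒳` and each admit a
(unique) index `jx c` whose affine component exceeds all others by at least `Δ`,
the matrix `Softmax((W_K·Linear(X))ᵀ·(W_Q·Linear(X)))·W_O` is entrywise within `ε`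
of the one-hot indicator matrix `[E(X_1), …, E(X_n)]`. -/
theorem attention_approximates_maxaffine_indicator
    (d n N : ℕ) (hd : 0 < d) (hn : 0 < n) (hNn : n ≤ N)
    (X : Set (Fin d → ℝ))
    (a : Fin N → Fin d → ℝ) (b : Fin N → ℝ)
    (Δ : ℝ) (hΔ : 0 < Δ) (ε : ℝ) (hε : 0 < ε) :
    ∃ (H : ℕ) (P : Fin H → Matrix (Fin (d + N)) (Fin d) ℝ)
      (Q : Fin H → Matrix (Fin n) (Fin N) ℝ)
      (Rb : Matrix (Fin (d + N)) (Fin N) ℝ)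
      (dA : ℕ) (WK WQ : Matrix (Fin dA) (Fin (d + N)) ℝ)
      (WO : Matrix (Fin N) (Fin n) ℝ),
      ∀ (Xm : Matrix (Fin d) (Fin n) ℝ) (jx : Fin n → Fin N),
        (∀ c : Fin n, (fun r => Xm r c) ∈ X) →
        (∀ c : Fin n, ∀ j : Fin N, j ≠ jx c →
          (∑ t, a (jx c) t * Xm t c) + b (jx c) ≥ ((∑ t, a j t * Xm t c) + b j) + Δ) →
        ∀ (r : Fin N) (c : Fin n),
          |(softmax ((WK * (∑ i, P i * Xm * Q i + Rb))ᵀ *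
              (WQ * (∑ i, P i * Xm * Q i + Rb))) * WO) r c
            - (if r = jx c then (1 : ℝ) else 0)| ≤ ε :=
  attention_approximates_maxaffine_indicator_general d n N hNn X a b Δ hΔ ε hε
end

section
/- Let 𝒳 ⊆ ℝ^d, let MaxAff(x) = max_{i∈[N]}(a_iᵀx + b_i) be a max-affine function with N ≥ n components, and let Δ > 0. For x ∈ ℝ^d admitting a unique index j(x) ∈ [N] with a_{j(x)}ᵀx + b_{j(x)} ≥ a_jᵀx + b_j + Δ for all j ≠ j(x), let F(x) = V_{j(x)}, where V_1,…,V_N ∈ ℝ^{d_V} are given vectors. Then for every ε > 0 there exist a sum-of-linear-transformations layer Linear : ℝ^{d×n} → ℝ^{(d+N)×N} and matrices W_K, W_Q, W_V, W_O (of suitable dimensions) such that for every X = [X_1,…,X_n] ∈ ℝ^{d×n} whose columns all lie in 𝒳 and all satisfy the Δ-margin condition above, ‖W_V·Linear(X) · Softmax((W_K·Linear(X))ᵀ · W_Q·Linear(X)) · W_O − [F(X_1), F(X_2), …, F(X_n)]‖_∞ ≤ ε. -/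
/-!
Token `j` of the linear layer is `(Y_j, e_j)`, where `Y = X E` places the `n` inputs in the
first `n` of the `N` positions and `e_j` is the one-hot position. Keys read `(a_j, b_j)` off the
position, the query of token `c` is `β (x_c, 1)`, and the value is `V_j`, so the attention score
of key `j` at query `c` is `β (a_jᵀ x_c + b_j)`. A margin `Δ` between the dominating component and
the others leaves every other key a softmax weight of at most `exp (-β Δ)`, so the output is within
`exp (-β Δ) ∑_j |V_j - V_{j(x_c)}|` of `V_{j(x_c)}`; it remains to take `β` large.
-/

open Matrix

open Real Filter

section Concentration

variable {ι : Type*} [Fintype ι]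

theorem abs_sum_mul_sub_le {w v : ι → ℝ} {j₀ : ι} {δ : ℝ} (hw₀ : ∀ j, 0 ≤ w j)
    (hw₁ : ∑ j, w j = 1) (hwδ : ∀ j ≠ j₀, w j ≤ δ) :
    |∑ j, v j * w j - v j₀| ≤ δ * ∑ j, |v j - v j₀| := by
  have hsum : ∑ j, v j * w j - v j₀ = ∑ j, w j * (v j - v j₀) :=
    calc ∑ j, v j * w j - v j₀ = ∑ j, v j * w j - (∑ j, w j) * v j₀ := by rw [hw₁, one_mul]
      _ = ∑ j, w j * (v j - v j₀) := by
        rw [Finset.sum_mul, ← Finset.sum_sub_distrib]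
        exact Finset.sum_congr rfl fun j _ => by ring
  rw [hsum, Finset.mul_sum]
  refine (Finset.abs_sum_le_sum_abs _ _).trans (Finset.sum_le_sum fun j _ => ?_)
  rw [abs_mul, abs_of_nonneg (hw₀ j)]
  rcases eq_or_ne j j₀ with rfl | hj
  · simp
  · exact mul_le_mul_of_nonneg_right (hwδ j hj) (abs_nonneg _)

theorem exp_div_sum_exp_le {s : ι → ℝ} {j₀ j : ι} {Δ : ℝ} (hj : s j + Δ ≤ s j₀) :
    exp (s j) / ∑ k, exp (s k) ≤ exp (-Δ) :=
  calc exp (s j) / ∑ k, exp (s k)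
      ≤ exp (s j) / exp (s j₀) := by
        gcongr
        exact Finset.single_le_sum (fun k _ => (exp_pos (s k)).le) (Finset.mem_univ j₀)
    _ = exp (s j - s j₀) := (exp_sub _ _).symm
    _ ≤ exp (-Δ) := exp_le_exp.mpr (by linarith)

end Concentration

theorem softmax_nonneg {a b : ℕ} (S : Matrix (Fin a) (Fin b) ℝ) (j : Fin a) (k : Fin b) :
    0 ≤ softmax S j k :=
  div_nonneg (exp_pos _).le (Finset.sum_nonneg fun _ _ => (exp_pos _).le)

theorem sum_softmax {a b : ℕ} [NeZero a] (S : Matrix (Fin a) (Fin b) ℝ) (k : Fin b) :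
    ∑ j, softmax S j k = 1 := by
  simp only [softmax, of_apply, ← Finset.sum_div]
  exact div_self (Finset.sum_pos (fun _ _ => exp_pos _) Finset.univ_nonempty).ne'

theorem abs_sum_mul_softmax_sub_le {a b : ℕ} {S : Matrix (Fin a) (Fin b) ℝ} {k : Fin b}
    {j₀ : Fin a} {Δ : ℝ} (hS : ∀ j ≠ j₀, S j k + Δ ≤ S j₀ k) (v : Fin a → ℝ) :
    |∑ j, v j * softmax S j k - v j₀| ≤ exp (-Δ) * ∑ j, |v j - v j₀| :=
  have : NeZero a := ⟨fun h => (h ▸ j₀).elim0⟩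
  abs_sum_mul_sub_le (softmax_nonneg S · k) (sum_softmax S k)
    fun j hj => exp_div_sum_exp_le (s := (S · k)) (hS j hj)

theorem exists_nonneg_exp_neg_mul_mul_le (K : ℝ) {Δ ε : ℝ} (hΔ : 0 < Δ) (hε : 0 < ε) :
    ∃ β, 0 ≤ β ∧ exp (-(β * Δ)) * K ≤ ε := by
  have hlim : Tendsto (fun β => exp (-(β * Δ)) * K) atTop (nhds 0) := by
    simpa using (tendsto_exp_neg_atTop_nhds_zero.comp
      (tendsto_id.atTop_mul_const hΔ)).mul_const K
  exact ((hlim.eventually (ge_mem_nhds hε)).and (eventually_ge_atTop 0)).exists.imp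
    fun _ h => ⟨h.2, h.1⟩

namespace MaxAffineAttention

variable {d n N dV : ℕ}

def tokens (Y : Matrix (Fin d) (Fin N) ℝ) : Matrix (Fin (d + N)) (Fin N) ℝ :=
  (fromRows Y 1).submatrix finSumFinEquiv.symm id

def tokenEmbedding (hNn : n ≤ N) : Matrix (Fin n) (Fin N) ℝ :=
  (1 : Matrix (Fin N) (Fin N) ℝ).submatrix (Fin.castLE hNn) id

def inputWeight (d N : ℕ) : Matrix (Fin (d + N)) (Fin d) ℝ :=
  (fromRows 1 0).submatrix finSumFinEquiv.symm id

def positionBias (d N : ℕ) : Matrix (Fin (d + N)) (Fin N) ℝ :=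
  (fromRows 0 1).submatrix finSumFinEquiv.symm id

def keyWeight (a : Fin N → Fin d → ℝ) (b : Fin N → ℝ) :
    Matrix (Fin (d + 1)) (Fin (d + N)) ℝ :=
  (fromCols 0 (fromRows (of a)ᵀ (replicateRow (Fin 1) b))).submatrix
    finSumFinEquiv.symm finSumFinEquiv.symm

def queryWeight (β : ℝ) (d N : ℕ) : Matrix (Fin (d + 1)) (Fin (d + N)) ℝ :=
  β • (fromCols (fromRows 1 0) (fromRows 0 (of fun _ _ => 1))).submatrix
    finSumFinEquiv.symm finSumFinEquiv.symm

def valueWeight (d : ℕ) (V : Fin N → Fin dV → ℝ) : Matrix (Fin dV) (Fin (d + N)) ℝ :=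
  (fromCols 0 (of V)ᵀ).submatrix id finSumFinEquiv.symm

theorem inputWeight_mul_mul_add_positionBias (X : Matrix (Fin d) (Fin n) ℝ)
    (Q : Matrix (Fin n) (Fin N) ℝ) :
    inputWeight d N * X * Q + positionBias d N = tokens (X * Q) := by
  rw [Matrix.mul_assoc]
  ext i k
  induction i using Fin.addCases <;>
    simp [inputWeight, positionBias, tokens, Matrix.mul_apply, one_apply]

theorem keyWeight_mul_tokens (a : Fin N → Fin d → ℝ) (b : Fin N → ℝ)
    (Y : Matrix (Fin d) (Fin N) ℝ) :
    keyWeight a b * tokens Y =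
      (fromRows (of a)ᵀ (replicateRow (Fin 1) b)).submatrix finSumFinEquiv.symm id := by
  rw [keyWeight, tokens, submatrix_mul_equiv, fromCols_mul_fromRows]
  simp

theorem queryWeight_mul_tokens (β : ℝ) (Y : Matrix (Fin d) (Fin N) ℝ) :
    queryWeight β d N * tokens Y =
      β • (fromRows Y (of fun _ _ => 1)).submatrix finSumFinEquiv.symm id := by
  rw [queryWeight, tokens, smul_mul, submatrix_mul_equiv, fromCols_mul_fromRows, fromRows_mul,
    fromRows_mul]
  congr 2
  ext (i | i) k <;> simp

theorem valueWeight_mul_tokens (V : Fin N → Fin dV → ℝ) (Y : Matrix (Fin d) (Fin N) ℝ) :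
    valueWeight d V * tokens Y = (of V)ᵀ := by
  rw [valueWeight, tokens, submatrix_mul_equiv, fromCols_mul_fromRows]
  simp

theorem attentionScore_apply (a : Fin N → Fin d → ℝ) (b : Fin N → ℝ) (β : ℝ)
    (Y : Matrix (Fin d) (Fin N) ℝ) (j k : Fin N) :
    ((keyWeight a b * tokens Y)ᵀ * (queryWeight β d N * tokens Y)) j k
      = β * ((∑ t, a j t * Y t k) + b j) := by
  rw [keyWeight_mul_tokens, queryWeight_mul_tokens, transpose_submatrix, Matrix.mul_smul,
    submatrix_mul_equiv, transpose_fromRows, fromCols_mul_fromRows]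
  simp [Matrix.mul_apply]

theorem mul_tokenEmbedding_apply_castLE (hNn : n ≤ N) (X : Matrix (Fin d) (Fin n) ℝ) (t : Fin d)
    (c : Fin n) :
    (X * tokenEmbedding hNn) t (Fin.castLE hNn c) = X t c := by
  simp [tokenEmbedding, Matrix.mul_apply, one_apply, Fin.castLE_inj]

theorem mul_transpose_tokenEmbedding_apply {m : ℕ} (hNn : n ≤ N) (M : Matrix (Fin m) (Fin N) ℝ)
    (r : Fin m) (c : Fin n) :
    (M * (tokenEmbedding hNn)ᵀ) r c = M r (Fin.castLE hNn c) := by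
  simp [tokenEmbedding, Matrix.mul_apply, one_apply]

end MaxAffineAttention

open MaxAffineAttention in
theorem attention_reassigns_values_maxaffine_general
    (d n N dV : ℕ) (hNn : n ≤ N)
    (X : Set (Fin d → ℝ))
    (a : Fin N → Fin d → ℝ) (b : Fin N → ℝ)
    (V : Fin N → Fin dV → ℝ)
    (Δ : ℝ) (hΔ : 0 < Δ) (ε : ℝ) (hε : 0 < ε) :
    ∃ (H : ℕ) (P : Fin H → Matrix (Fin (d + N)) (Fin d) ℝ)
      (Q : Fin H → Matrix (Fin n) (Fin N) ℝ)
      (Rb : Matrix (Fin (d + N)) (Fin N) ℝ)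
      (dA : ℕ) (WK WQ : Matrix (Fin dA) (Fin (d + N)) ℝ)
      (WV : Matrix (Fin dV) (Fin (d + N)) ℝ)
      (WO : Matrix (Fin N) (Fin n) ℝ),
      ∀ (Xm : Matrix (Fin d) (Fin n) ℝ) (jx : Fin n → Fin N),
        (∀ c : Fin n, (fun r => Xm r c) ∈ X) →
        (∀ c : Fin n, ∀ j : Fin N, j ≠ jx c →
          (∑ t, a (jx c) t * Xm t c) + b (jx c) ≥ ((∑ t, a j t * Xm t c) + b j) + Δ) →
        ∀ (r : Fin dV) (c : Fin n),
          |(WV * (∑ i, P i * Xm * Q i + Rb) *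
              softmax ((WK * (∑ i, P i * Xm * Q i + Rb))ᵀ *
                (WQ * (∑ i, P i * Xm * Q i + Rb))) * WO) r c
            - V (jx c) r| ≤ ε := by
  obtain ⟨β, hβ, hβε⟩ :=
    exists_nonneg_exp_neg_mul_mul_le (∑ r, ∑ j₀, ∑ j, |V j r - V j₀ r|) hΔ hε
  refine ⟨1, fun _ => inputWeight d N, fun _ => tokenEmbedding hNn, positionBias d N, d + 1,
    keyWeight a b, queryWeight β d N, valueWeight d V, (tokenEmbedding hNn)ᵀ, ?_⟩
  intro Xm jx _ hmargin r c
  rw [Fin.sum_univ_one, inputWeight_mul_mul_add_positionBias, valueWeight_mul_tokens,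
    mul_transpose_tokenEmbedding_apply, Matrix.mul_apply]
  set S := (keyWeight a b * tokens (Xm * tokenEmbedding hNn))ᵀ *
    (queryWeight β d N * tokens (Xm * tokenEmbedding hNn))
  have hscore : ∀ j ≠ jx c, S j (Fin.castLE hNn c) + β * Δ ≤ S (jx c) (Fin.castLE hNn c) := by
    intro j hj
    simp only [S, attentionScore_apply, mul_tokenEmbedding_apply_castLE, ← mul_add]
    exact mul_le_mul_of_nonneg_left (by linarith [hmargin c j hj]) hβ
  have hspread : ∑ j, |V j r - V (jx c) r| ≤ ∑ r, ∑ j₀, ∑ j, |V j r - V j₀ r| :=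
    (Finset.single_le_sum (f := fun j₀ => ∑ j, |V j r - V j₀ r|) (fun _ _ => by positivity)
      (Finset.mem_univ _)).trans
    (Finset.single_le_sum (f := fun r => ∑ j₀, ∑ j, |V j r - V j₀ r|) (fun _ _ => by positivity)
      (Finset.mem_univ r))
  calc |∑ j, V j r * softmax S j (Fin.castLE hNn c) - V (jx c) r|
      ≤ exp (-(β * Δ)) * ∑ j, |V j r - V (jx c) r| := abs_sum_mul_softmax_sub_le hscore _
    _ ≤ exp (-(β * Δ)) * ∑ r, ∑ j₀, ∑ j, |V j r - V j₀ r| := by gcongr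
    _ ≤ ε := hβε

/-- **Attention reassigns values to the cells of a max-affine partition.**
Given a max-affine function with `N ≥ n` components on `𝒳 ⊆ ℝ^d`, a margin `Δ > 0`,
and values `V_1, …, V_N ∈ ℝ^{d_V}` (so that `F(x) = V_{j(x)}`, where `j(x)` is the
index of the dominating affine component), for every `ε > 0` there are a
sum-of-linear-transformations layer `Linear : ℝ^{d×n} → ℝ^{(d+N)×N}`
(given by `Z ↦ ∑ i, P i * Z * Q i + Rb`) and matrices `W_K, W_Q, W_V, W_O`
of suitable dimensions such that for every input `X ∈ ℝ^{d×n}` whose columns lie in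
`𝒳` and each admit a (unique) index `jx c` whose affine component exceeds all others
by at least `Δ`, the attention output
`W_V·Linear(X) · Softmax((W_K·Linear(X))ᵀ·(W_Q·Linear(X))) · W_O`
is entrywise within `ε` of `[F(X_1), …, F(X_n)]`. -/
theorem attention_reassigns_values_maxaffine
    (d n N dV : ℕ) (hd : 0 < d) (hn : 0 < n) (hNn : n ≤ N)
    (X : Set (Fin d → ℝ))
    (a : Fin N → Fin d → ℝ) (b : Fin N → ℝ)
    (V : Fin N → Fin dV → ℝ)
    (Δ : ℝ) (hΔ : 0 < Δ) (ε : ℝ) (hε : 0 < ε) :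
    ∃ (H : ℕ) (P : Fin H → Matrix (Fin (d + N)) (Fin d) ℝ)
      (Q : Fin H → Matrix (Fin n) (Fin N) ℝ)
      (Rb : Matrix (Fin (d + N)) (Fin N) ℝ)
      (dA : ℕ) (WK WQ : Matrix (Fin dA) (Fin (d + N)) ℝ)
      (WV : Matrix (Fin dV) (Fin (d + N)) ℝ)
      (WO : Matrix (Fin N) (Fin n) ℝ),
      ∀ (Xm : Matrix (Fin d) (Fin n) ℝ) (jx : Fin n → Fin N),
        (∀ c : Fin n, (fun r => Xm r c) ∈ X) →
        (∀ c : Fin n, ∀ j : Fin N, j ≠ jx c →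
          (∑ t, a (jx c) t * Xm t c) + b (jx c) ≥ ((∑ t, a j t * Xm t c) + b j) + Δ) →
        ∀ (r : Fin dV) (c : Fin n),
          |(WV * (∑ i, P i * Xm * Q i + Rb) *
              softmax ((WK * (∑ i, P i * Xm * Q i + Rb))ᵀ *
                (WQ * (∑ i, P i * Xm * Q i + Rb))) * WO) r c
            - V (jx c) r| ≤ ε :=
  attention_reassigns_values_maxaffine_general d n N dV hNn X a b V Δ hΔ ε hε
end

section
/- Let v_0,…,v_{G−1} ∈ ℝ^m, x ∈ ℝ^m, δ > 0 and R > 0, and suppose there exists an index j_m with ‖x − v_{j_m}‖₂ ≤ δ/2. Then Σ_{j : ‖x − v_j‖₂ ≥ δ} exp(R(v_jᵀx − ½‖v_j‖₂²)) ≤ G · exp(−3Rδ²/8) · Σ_{j=0}^{G−1} exp(R(v_jᵀx − ½‖v_j‖₂²)). In particular, the total softmax weight (at inverse temperature R, with scores v_jᵀx − ½‖v_j‖₂²) carried by centers at Euclidean distance at least δ from x is at most G·exp(−3Rδ²/8). -/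
open scoped Classical

/-- **Far-away centers carry exponentially small softmax weight.**
Let `v_0,…,v_{G−1}, x ∈ ℝ^m`, `δ > 0`, `R > 0`, and suppose some center `v_{j_m}`
satisfies `‖x − v_{j_m}‖₂ ≤ δ/2`.  Then the total (unnormalized) weight
`∑_{j : ‖x − v_j‖₂ ≥ δ} exp(R(v_jᵀx − ½‖v_j‖²))` is at most
`G·exp(−3Rδ²/8)` times the full normalizing sum. -/
theorem far_centers_small_softmax_weight
    (m G : ℕ) (v : Fin G → Fin m → ℝ) (x : Fin m → ℝ)
    (δ R : ℝ) (hδ : 0 < δ) (hR : 0 < R)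
    (jm : Fin G) (hjm : Real.sqrt (∑ t, (x t - v jm t) ^ 2) ≤ δ / 2) :
    (∑ j : Fin G,
        if δ ≤ Real.sqrt (∑ t, (x t - v j t) ^ 2) then
          Real.exp (R * ((∑ t, v j t * x t) - (∑ t, v j t ^ 2) / 2))
        else 0)
      ≤ (G : ℝ) * Real.exp (-3 * R * δ ^ 2 / 8) *
          ∑ j : Fin G, Real.exp (R * ((∑ t, v j t * x t) - (∑ t, v j t ^ 2) / 2)) := by
  -- expand the squared distance
  have hexp : ∀ j : Fin G, ∑ t, (x t - v j t) ^ 2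
      = (∑ t, x t ^ 2) - 2 * (∑ t, v j t * x t) + (∑ t, v j t ^ 2) := by
    intro j
    have h := Finset.sum_congr rfl (fun t (_ : t ∈ Finset.univ) =>
      show (x t - v j t) ^ 2 = x t ^ 2 - 2 * (v j t * x t) + v j t ^ 2 by ring)
    rw [h, Finset.sum_add_distrib, Finset.sum_sub_distrib, ← Finset.mul_sum]
  have hBnn : (0:ℝ) ≤ ∑ t, (x t - v jm t) ^ 2 :=
    Finset.sum_nonneg fun t _ => sq_nonneg _
  have hB : (∑ t, (x t - v jm t) ^ 2) ≤ δ ^ 2 / 4 := by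
    nlinarith [Real.sq_sqrt hBnn, Real.sqrt_nonneg (∑ t, (x t - v jm t) ^ 2)]
  -- pointwise bound for far centers
  have key : ∀ j : Fin G, δ ≤ Real.sqrt (∑ t, (x t - v j t) ^ 2) →
      Real.exp (R * ((∑ t, v j t * x t) - (∑ t, v j t ^ 2) / 2))
        ≤ Real.exp (-3 * R * δ ^ 2 / 8) *
          Real.exp (R * ((∑ t, v jm t * x t) - (∑ t, v jm t ^ 2) / 2)) := by
    intro j hj
    have hAnn : (0:ℝ) ≤ ∑ t, (x t - v j t) ^ 2 :=
      Finset.sum_nonneg fun t _ => sq_nonneg _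
    have hA : δ ^ 2 ≤ ∑ t, (x t - v j t) ^ 2 := by
      nlinarith [Real.sq_sqrt hAnn]
    rw [← Real.exp_add]
    apply Real.exp_le_exp.mpr
    have h1 := hexp j
    have h2 := hexp jm
    nlinarith [hR.le, mul_le_mul_of_nonneg_left hA hR.le,
      mul_le_mul_of_nonneg_left hB hR.le]
  calc (∑ j : Fin G,
        if δ ≤ Real.sqrt (∑ t, (x t - v j t) ^ 2) then
          Real.exp (R * ((∑ t, v j t * x t) - (∑ t, v j t ^ 2) / 2))
        else 0)
      ≤ ∑ _j : Fin G, Real.exp (-3 * R * δ ^ 2 / 8) *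
          Real.exp (R * ((∑ t, v jm t * x t) - (∑ t, v jm t ^ 2) / 2)) := by
        apply Finset.sum_le_sum
        intro j _
        split_ifs with h
        · exact key j h
        · positivity
    _ = (G : ℝ) * Real.exp (-3 * R * δ ^ 2 / 8) *
          Real.exp (R * ((∑ t, v jm t * x t) - (∑ t, v jm t ^ 2) / 2)) := by
        rw [Finset.sum_const, Finset.card_univ, Fintype.card_fin, nsmul_eq_mul]
        ring
    _ ≤ (G : ℝ) * Real.exp (-3 * R * δ ^ 2 / 8) *
          ∑ j : Fin G, Real.exp (R * ((∑ t, v j t * x t) - (∑ t, v j t ^ 2) / 2)) := by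
        have h := Finset.single_le_sum
          (f := fun j : Fin G => Real.exp (R * ((∑ t, v j t * x t) - (∑ t, v j t ^ 2) / 2)))
          (fun j _ => (Real.exp_pos _).le) (Finset.mem_univ jm)
        have hnn : (0:ℝ) ≤ (G : ℝ) * Real.exp (-3 * R * δ ^ 2 / 8) := by positivity
        exact mul_le_mul_of_nonneg_left h hnn
end

section
/- Let S ⊆ ℝ^m, let f : S → ℝ^k satisfy ‖f(x)‖_∞ ≤ B₀ for all x ∈ S with B₀ > 0, let ε > 0, δ > 0, and let v_0,…,v_{G−1} ∈ S be points such that: (i) every x ∈ S has some index j with ‖x − v_j‖₂ ≤ δ/2, and (ii) for all x ∈ S and all j, ‖x − v_j‖₂ ≤ δ implies ‖f(x) − f(v_j)‖_∞ ≤ ε/3. Assume 6B₀G ≥ ε. Then for every R ≥ (8/(3δ²))·ln(6B₀G/ε) and every x ∈ S, ‖Σ_{j=0}^{G−1} w_j(x)·f(v_j) − f(x)‖_∞ ≤ ε, where w_j(x) = exp(R(v_jᵀx − ½‖v_j‖₂²)) / Σ_{k=0}^{G−1} exp(R(v_kᵀx − ½‖v_k‖₂²)). -/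
/-- **Softmax-weighted averages of sampled values approximate the function.**
Let `f : S → ℝ^k` be bounded by `B₀` in sup norm, and let `v_0,…,v_{G−1} ∈ S`
be anchors such that (i) every `x ∈ S` is within Euclidean distance `δ/2` of some
anchor, and (ii) `‖x − v_j‖₂ ≤ δ` implies `‖f(x) − f(v_j)‖_∞ ≤ ε/3`.
If `6B₀G ≥ ε`, then for every `R ≥ (8/(3δ²))·ln(6B₀G/ε)` and every `x ∈ S`, the
softmax-weighted average `∑_j w_j(x) f(v_j)` (weights from scores
`v_jᵀx − ½‖v_j‖²` at inverse temperature `R`) is within `ε` of `f(x)` in sup norm. -/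
theorem softmax_weighted_average_approximates
    (m k G : ℕ) (hG : 0 < G)
    (S : Set (Fin m → ℝ)) (f : (Fin m → ℝ) → Fin k → ℝ)
    (B₀ : ℝ) (hB₀ : 0 < B₀) (hfB : ∀ x ∈ S, ∀ i, |f x i| ≤ B₀)
    (ε δ : ℝ) (hε : 0 < ε) (hδ : 0 < δ)
    (v : Fin G → Fin m → ℝ) (hvS : ∀ j, v j ∈ S)
    (hcover : ∀ x ∈ S, ∃ j, Real.sqrt (∑ t, (x t - v j t) ^ 2) ≤ δ / 2)
    (hmod : ∀ x ∈ S, ∀ j, Real.sqrt (∑ t, (x t - v j t) ^ 2) ≤ δ →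
      ∀ i, |f x i - f (v j) i| ≤ ε / 3)
    (hBGε : ε ≤ 6 * B₀ * G) :
    ∀ R : ℝ, R ≥ 8 / (3 * δ ^ 2) * Real.log (6 * B₀ * G / ε) →
      ∀ x ∈ S, ∀ i : Fin k,
        |(∑ j : Fin G,
            (Real.exp (R * ((∑ t, v j t * x t) - (∑ t, v j t ^ 2) / 2)) /
              ∑ j' : Fin G,
                Real.exp (R * ((∑ t, v j' t * x t) - (∑ t, v j' t ^ 2) / 2)))
              * f (v j) i)
          - f x i| ≤ ε := by
  intro R hR x hx i
  have hGpos : (0:ℝ) < (G:ℝ) := by exact_mod_cast hG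
  -- R is nonnegative
  have hlognn : 0 ≤ Real.log (6 * B₀ * G / ε) := by
    apply Real.log_nonneg
    rw [le_div_iff₀ hε]
    linarith
  have hRnn : 0 ≤ R :=
    le_trans (mul_nonneg (by positivity) hlognn) hR
  -- distances and weights
  set X : ℝ := ∑ t, x t ^ 2 with hX
  set d : Fin G → ℝ := fun j => ∑ t, (x t - v j t) ^ 2 with hd
  have hdnn : ∀ j, 0 ≤ d j := fun j => Finset.sum_nonneg fun t _ => sq_nonneg _
  set a : Fin G → ℝ := fun j => Real.exp (-(R * d j) / 2) with ha
  have hapos : ∀ j, 0 < a j := fun j => Real.exp_pos _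
  have hCpos : (0:ℝ) < Real.exp (R * X / 2) := Real.exp_pos _
  have he : ∀ j : Fin G, Real.exp (R * ((∑ t, v j t * x t) - (∑ t, v j t ^ 2) / 2))
      = Real.exp (R * X / 2) * a j := by
    intro j
    have hdj : d j = X - 2 * (∑ t, v j t * x t) + ∑ t, v j t ^ 2 := by
      simp only [hd, hX]
      rw [Finset.mul_sum, ← Finset.sum_sub_distrib, ← Finset.sum_add_distrib]
      exact Finset.sum_congr rfl fun t _ => by ring
    simp only [ha]
    rw [← Real.exp_add]
    congr 1
    rw [hdj]; ring
  set A : ℝ := ∑ j, a j with hA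
  have hApos : 0 < A := Finset.sum_pos (fun j _ => hapos j) ⟨⟨0, hG⟩, Finset.mem_univ _⟩
  have hden : (∑ j' : Fin G, Real.exp (R * ((∑ t, v j' t * x t) - (∑ t, v j' t ^ 2) / 2)))
      = Real.exp (R * X / 2) * A := by
    rw [hA, Finset.mul_sum]
    exact Finset.sum_congr rfl fun j _ => he j
  simp only [he, ← Finset.mul_sum, ← hA, mul_div_mul_left _ _ (ne_of_gt hCpos)]
  -- weights sum to one
  have hw1 : ∑ j, a j / A = 1 := by
    rw [← Finset.sum_div, ← hA]
    exact div_self hApos.ne'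
  have key : ∑ j, a j / A * (f (v j) i - f x i) = (∑ j, a j / A * f (v j) i) - f x i := by
    simp only [mul_sub]
    rw [Finset.sum_sub_distrib, ← Finset.sum_mul, hw1, one_mul]
  rw [← key]
  -- nearest anchor
  obtain ⟨j₀, hj₀⟩ := hcover x hx
  have hdj₀ : d j₀ ≤ δ ^ 2 / 4 := by
    nlinarith [Real.sq_sqrt (hdnn j₀), Real.sqrt_nonneg (d j₀)]
  -- bound on exp(-3Rδ²/8)
  have hEle : Real.exp (-(3 * R * δ ^ 2 / 8)) ≤ ε / (6 * B₀ * G) := by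
    have h1 : Real.log (6 * B₀ * G / ε) ≤ 3 * R * δ ^ 2 / 8 := by
      have h2 := mul_le_mul_of_nonneg_left hR (by positivity : (0:ℝ) ≤ 3 * δ ^ 2 / 8)
      calc Real.log (6 * B₀ * G / ε)
          = 3 * δ ^ 2 / 8 * (8 / (3 * δ ^ 2) * Real.log (6 * B₀ * G / ε)) := by
            field_simp
        _ ≤ 3 * δ ^ 2 / 8 * R := h2
        _ = 3 * R * δ ^ 2 / 8 := by ring
    calc Real.exp (-(3 * R * δ ^ 2 / 8))
        ≤ Real.exp (-(Real.log (6 * B₀ * G / ε))) := Real.exp_le_exp.mpr (by linarith)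
      _ = ε / (6 * B₀ * G) := by
          rw [Real.exp_neg, Real.exp_log (by positivity), inv_div]
  -- per-term bound
  have hterm : ∀ j : Fin G, |a j / A * (f (v j) i - f x i)|
      ≤ a j / A * (ε / 3) + 2 * B₀ * Real.exp (-(3 * R * δ ^ 2 / 8)) := by
    intro j
    have hwnn : 0 ≤ a j / A := div_nonneg (hapos j).le hApos.le
    rw [abs_mul, abs_of_nonneg hwnn]
    by_cases hnear : d j ≤ δ ^ 2
    · have hsq : Real.sqrt (d j) ≤ δ := by
        calc Real.sqrt (d j) ≤ Real.sqrt (δ ^ 2) := Real.sqrt_le_sqrt hnear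
          _ = δ := Real.sqrt_sq hδ.le
      have hf3 := hmod x hx j hsq i
      have h1 : a j / A * |f (v j) i - f x i| ≤ a j / A * (ε / 3) := by
        apply mul_le_mul_of_nonneg_left _ hwnn
        rw [abs_sub_comm]; exact hf3
      have h2 : (0:ℝ) ≤ 2 * B₀ * Real.exp (-(3 * R * δ ^ 2 / 8)) := by positivity
      linarith
    · push_neg at hnear
      have hw : a j / A ≤ Real.exp (-(3 * R * δ ^ 2 / 8)) := by
        have hAge : a j₀ ≤ A := Finset.single_le_sum (fun j _ => (hapos j).le)
          (Finset.mem_univ j₀)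
        have hstep : a j / A ≤ a j / a j₀ := by gcongr
        have hratio : a j / a j₀ = Real.exp (-(R * d j) / 2 - -(R * d j₀) / 2) := by
          simp only [ha]
          rw [Real.exp_sub]
        have hexp : -(R * d j) / 2 - -(R * d j₀) / 2 ≤ -(3 * R * δ ^ 2 / 8) := by
          have h3 : R * (3 * δ ^ 2 / 4) ≤ R * (d j - d j₀) := by
            apply mul_le_mul_of_nonneg_left _ hRnn
            linarith
          linarith
        calc a j / A ≤ a j / a j₀ := hstep
          _ = Real.exp (-(R * d j) / 2 - -(R * d j₀) / 2) := hratio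
          _ ≤ Real.exp (-(3 * R * δ ^ 2 / 8)) := Real.exp_le_exp.mpr hexp
      have hfb : |f (v j) i - f x i| ≤ 2 * B₀ := by
        have h1 := hfB x hx i
        have h2 := hfB (v j) (hvS j) i
        calc |f (v j) i - f x i| ≤ |f (v j) i| + |f x i| := abs_sub _ _
          _ ≤ 2 * B₀ := by linarith
      have h3 : a j / A * |f (v j) i - f x i|
          ≤ Real.exp (-(3 * R * δ ^ 2 / 8)) * (2 * B₀) :=
        mul_le_mul hw hfb (abs_nonneg _) (Real.exp_pos _).le
      have h4 : 0 ≤ a j / A * (ε / 3) := mul_nonneg hwnn (by linarith)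
      linarith
  -- total
  have hEG : (G:ℝ) * (2 * B₀ * Real.exp (-(3 * R * δ ^ 2 / 8))) ≤ ε / 3 := by
    have h1 : (G:ℝ) * (2 * B₀ * Real.exp (-(3 * R * δ ^ 2 / 8)))
        ≤ (G:ℝ) * (2 * B₀ * (ε / (6 * B₀ * G))) := by
      apply mul_le_mul_of_nonneg_left _ hGpos.le
      apply mul_le_mul_of_nonneg_left hEle (by positivity)
    have h2 : (G:ℝ) * (2 * B₀ * (ε / (6 * B₀ * G))) = ε / 3 := by
      field_simp
      ring
    linarith
  calc |∑ j, a j / A * (f (v j) i - f x i)|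
      ≤ ∑ j, |a j / A * (f (v j) i - f x i)| := Finset.abs_sum_le_sum_abs _ _
    _ ≤ ∑ j : Fin G, (a j / A * (ε / 3) + 2 * B₀ * Real.exp (-(3 * R * δ ^ 2 / 8))) :=
        Finset.sum_le_sum fun j _ => hterm j
    _ = (∑ j, a j / A) * (ε / 3)
        + (G:ℝ) * (2 * B₀ * Real.exp (-(3 * R * δ ^ 2 / 8))) := by
        rw [Finset.sum_add_distrib, ← Finset.sum_mul, Finset.sum_const, Finset.card_univ,
          Fintype.card_fin, nsmul_eq_mul]
    _ = ε / 3 + (G:ℝ) * (2 * B₀ * Real.exp (-(3 * R * δ ^ 2 / 8))) := by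
        rw [hw1, one_mul]
    _ ≤ ε / 3 + ε / 3 := by linarith
    _ ≤ ε := by linarith
end

section
/- Let U ⊆ ℝ^m be compact, f : U → ℝ^k continuous, and ε > 0. Then there exist a positive integer G, points v_0,…,v_{G−1} ∈ ℝ^m, values y_0,…,y_{G−1} ∈ ℝ^k, and R > 0 such that for every x ∈ U: ‖Σ_{j=0}^{G−1} (exp(R(v_jᵀx − ½‖v_j‖₂²)) / Σ_{k'=0}^{G−1} exp(R(v_{k'}ᵀx − ½‖v_{k'}‖₂²))) · y_j − f(x)‖_∞ ≤ ε. -/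
set_option maxHeartbeats 1000000 in

/-- **Core of self-attention universal approximation.**
For any compact `U ⊆ ℝ^m`, continuous `f : U → ℝ^k`, and `ε > 0`, there exist
`G > 0`, centers `v_0,…,v_{G−1} ∈ ℝ^m`, values `y_0,…,y_{G−1} ∈ ℝ^k`, and `R > 0`
such that the softmax-weighted combination (weights from scores `v_jᵀx − ½‖v_j‖²`
at inverse temperature `R`) of the `y_j` is uniformly within `ε` of `f` on `U`
in the sup norm. -/
theorem selfattention_core_universal_approximation
    (m k : ℕ) (U : Set (Fin m → ℝ)) (hU : IsCompact U)
    (f : (Fin m → ℝ) → Fin k → ℝ) (hf : ContinuousOn f U)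
    (ε : ℝ) (hε : 0 < ε) :
    ∃ (G : ℕ), 0 < G ∧
      ∃ (v : Fin G → Fin m → ℝ) (y : Fin G → Fin k → ℝ) (R : ℝ),
        0 < R ∧
        ∀ x ∈ U, ∀ i : Fin k,
          |(∑ j : Fin G,
              (Real.exp (R * ((∑ t, v j t * x t) - (∑ t, v j t ^ 2) / 2)) /
                ∑ j' : Fin G,
                  Real.exp (R * ((∑ t, v j' t * x t) - (∑ t, v j' t ^ 2) / 2)))
                * y j i)
            - f x i| ≤ ε := by
  classical
  rcases U.eq_empty_or_nonempty with hUe | ⟨x0, hx0⟩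
  · exact ⟨1, one_pos, fun _ _ => 0, fun _ _ => 0, 1, one_pos, by simp [hUe]⟩
  -- bound on f
  obtain ⟨C, hC⟩ := hU.exists_bound_of_continuousOn hf
  set M : ℝ := max C 1 with hMdef
  have hM1 : (1:ℝ) ≤ M := le_max_right _ _
  have hMpos : (0:ℝ) < M := lt_of_lt_of_le one_pos hM1
  have hfM : ∀ x ∈ U, ∀ i, |f x i| ≤ M := by
    intro x hx i
    calc |f x i| = ‖f x i‖ := rfl
      _ ≤ ‖f x‖ := norm_le_pi_norm (f x) i
      _ ≤ C := hC x hx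
      _ ≤ M := le_max_left _ _
  -- uniform continuity
  have huc : UniformContinuousOn f U := hU.uniformContinuousOn_of_continuous hf
  obtain ⟨δ, hδ, hδf⟩ := Metric.uniformContinuousOn_iff.mp huc (ε/2) (by positivity)
  -- squared-distance function
  set Q : (Fin m → ℝ) → (Fin m → ℝ) → ℝ := fun v x => ∑ t, (x t - v t)^2 with hQdef
  have hQnn : ∀ v x, 0 ≤ Q v x := fun v x => Finset.sum_nonneg fun t _ => sq_nonneg _
  -- finite subcover
  have hopen : ∀ p : U, IsOpen {x : Fin m → ℝ | Q p.1 x < δ^2/4} := by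
    intro p
    have : Continuous fun x : Fin m → ℝ => Q p.1 x := by
      simp only [hQdef]
      exact continuous_finset_sum _ fun t _ => ((continuous_apply t).sub continuous_const).pow 2
    exact isOpen_lt this continuous_const
  have hcov : U ⊆ ⋃ p : U, {x : Fin m → ℝ | Q p.1 x < δ^2/4} := by
    intro x hx
    refine Set.mem_iUnion.mpr ⟨⟨x, hx⟩, ?_⟩
    have : Q x x = 0 := by simp [hQdef]
    simp only [Set.mem_setOf_eq, this]
    positivity
  obtain ⟨S, hS⟩ := hU.elim_finite_subcover _ hopen hcov
  have hSne : S.Nonempty := by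
    obtain ⟨p, hp, -⟩ := Set.mem_iUnion₂.mp (hS hx0)
    exact ⟨p, hp⟩
  set G := S.card with hGdef
  have hG : 0 < G := Finset.card_pos.mpr hSne
  set v : Fin G → Fin m → ℝ := fun j => ((S.equivFin.symm j : S) : U).1 with hvdef
  have hvU : ∀ j, v j ∈ U := fun j => ((S.equivFin.symm j : S) : U).2
  -- nearest center
  have hnear : ∀ x ∈ U, ∃ j : Fin G, Q (v j) x < δ^2/4 := by
    intro x hx
    obtain ⟨p, hp, hxp⟩ := Set.mem_iUnion₂.mp (hS hx)
    refine ⟨S.equivFin ⟨p, hp⟩, ?_⟩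
    have : v (S.equivFin ⟨p, hp⟩) = p.1 := by
      simp [hvdef]
    rw [this]
    exact hxp
  -- choose R
  set a : ℝ := 3*δ^2/8 with hadef
  have ha : 0 < a := by positivity
  set c : ℝ := ε/(4*M*G) with hcdef
  have hc : 0 < c := by positivity
  set R : ℝ := max 1 ((-Real.log c)/a) with hRdef
  have hR : 0 < R := lt_of_lt_of_le one_pos (le_max_left _ _)
  have hexpc : Real.exp (-(R*a)) ≤ c := by
    have h1 : (-Real.log c)/a ≤ R := le_max_right _ _
    have h2 : -Real.log c ≤ R * a := by
      rw [div_le_iff₀ ha] at h1; linarith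
    calc Real.exp (-(R*a)) ≤ Real.exp (Real.log c) := Real.exp_le_exp.mpr (by linarith)
      _ = c := Real.exp_log hc
  refine ⟨G, hG, v, fun j => f (v j), R, hR, ?_⟩
  intro x hx i
  -- notation
  set E : Fin G → ℝ := fun j =>
    Real.exp (R * ((∑ t, v j t * x t) - (∑ t, v j t ^ 2) / 2)) with hEdef
  set F : Fin G → ℝ := fun j => Real.exp (-(R * Q (v j) x)/2) with hFdef
  set C0 : ℝ := Real.exp (R * (∑ t, x t ^ 2)/2) with hC0def
  have hC0 : 0 < C0 := Real.exp_pos _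
  have hEF : ∀ j, E j = C0 * F j := by
    intro j
    simp only [hEdef, hFdef, hC0def]
    rw [← Real.exp_add]
    congr 1
    have hQ : Q (v j) x = (∑ t, x t ^ 2) - 2*(∑ t, v j t * x t) + (∑ t, v j t ^ 2) := by
      simp only [hQdef]
      rw [Finset.mul_sum, ← Finset.sum_sub_distrib, ← Finset.sum_add_distrib]
      exact Finset.sum_congr rfl fun t _ => by ring
    rw [hQ]; ring
  have hFpos : ∀ j, 0 < F j := fun j => Real.exp_pos _
  set DF : ℝ := ∑ j, F j with hDFdef
  have hDF : 0 < DF := Finset.sum_pos (fun j _ => hFpos j) (by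
    exact Finset.univ_nonempty_iff.mpr ⟨⟨0, hG⟩⟩)
  have hD : (∑ j', E j') = C0 * DF := by
    rw [hDFdef, Finset.mul_sum]
    exact Finset.sum_congr rfl fun j _ => hEF j
  have hw : ∀ j, E j / (∑ j', E j') = F j / DF := by
    intro j
    rw [hEF j, hD, mul_div_mul_left _ _ (ne_of_gt hC0)]
  have hwnn : ∀ j, 0 ≤ F j / DF := fun j => le_of_lt (div_pos (hFpos j) hDF)
  have hwsum : ∑ j, F j / DF = 1 := by
    rw [← Finset.sum_div, ← hDFdef, div_self (ne_of_gt hDF)]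
  -- rewrite goal with weights
  have hgoal : (∑ j, (E j / ∑ j', E j') * f (v j) i) - f x i
      = ∑ j, (F j / DF) * (f (v j) i - f x i) := by
    have h1 : (∑ j, (E j / ∑ j', E j') * f (v j) i) = ∑ j, (F j / DF) * f (v j) i :=
      Finset.sum_congr rfl fun j _ => by rw [hw j]
    rw [h1]
    have h2 : ∑ j, (F j / DF) * (f (v j) i - f x i)
        = (∑ j, (F j / DF) * f (v j) i) - ∑ j, (F j / DF) * f x i := by
      rw [← Finset.sum_sub_distrib]
      exact Finset.sum_congr rfl fun j _ => by ring
    rw [h2, ← Finset.sum_mul, hwsum, one_mul]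
  rw [hgoal]
  -- triangle inequality
  have htri : |∑ j, (F j / DF) * (f (v j) i - f x i)|
      ≤ ∑ j, (F j / DF) * |f (v j) i - f x i| := by
    refine (Finset.abs_sum_le_sum_abs _ _).trans (le_of_eq ?_)
    exact Finset.sum_congr rfl fun j _ => by
      rw [abs_mul, abs_of_nonneg (hwnn j)]
  refine htri.trans ?_
  -- per-term bound
  obtain ⟨j0, hj0⟩ := hnear x hx
  have hterm : ∀ j, (F j / DF) * |f (v j) i - f x i|
      ≤ (F j / DF) * (ε/2) + c * (2*M) := by
    intro j
    by_cases hQj : Q (v j) x < δ^2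
    · -- near case
      have hdist : dist x (v j) < δ := by
        rw [dist_pi_lt_iff hδ]
        intro t
        have h1 : (x t - v j t)^2 ≤ Q (v j) x := by
          simp only [hQdef]
          exact Finset.single_le_sum (f := fun t => (x t - v j t)^2)
            (fun t _ => sq_nonneg _) (Finset.mem_univ t)
        have h2 : (x t - v j t)^2 < δ^2 := lt_of_le_of_lt h1 hQj
        have := abs_lt_of_sq_lt_sq' h2 (le_of_lt hδ)
        rw [Real.dist_eq, abs_lt]
        exact ⟨this.1, this.2⟩
      have hfd : dist (f x) (f (v j)) < ε/2 := hδf x hx (v j) (hvU j) hdist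
      have hcomp : |f (v j) i - f x i| ≤ ε/2 := by
        have := dist_le_pi_dist (f x) (f (v j)) i
        rw [Real.dist_eq] at this
        have h3 : |f x i - f (v j) i| < ε/2 := lt_of_le_of_lt this hfd
        rw [abs_sub_comm] at h3
        linarith
      have h4 : (F j / DF) * |f (v j) i - f x i| ≤ (F j / DF) * (ε/2) :=
        mul_le_mul_of_nonneg_left hcomp (hwnn j)
      have h5 : 0 ≤ c * (2*M) := mul_nonneg hc.le (by linarith)
      linarith
    · -- far case
      push_neg at hQj
      have hwle : F j / DF ≤ c := by
        have h1 : F j / DF ≤ F j / F j0 := by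
          apply div_le_div_of_nonneg_left (le_of_lt (hFpos j)) (hFpos j0)
          exact Finset.single_le_sum (fun j _ => le_of_lt (hFpos j)) (Finset.mem_univ j0)
        have h2 : F j / F j0 = Real.exp (-(R * Q (v j) x)/2 - -(R * Q (v j0) x)/2) := by
          rw [hFdef, Real.exp_sub]
        have h3 : -(R * Q (v j) x)/2 - -(R * Q (v j0) x)/2 ≤ -(R*a) := by
          have hd : 3*δ^2/4 ≤ Q (v j) x - Q (v j0) x := by linarith
          have h5 : R * (3*δ^2/4) ≤ R * (Q (v j) x - Q (v j0) x) :=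
            mul_le_mul_of_nonneg_left hd (le_of_lt hR)
          rw [mul_sub] at h5
          have h6 : R*(3*δ^2/8) = R*(3*δ^2/4)/2 := by ring
          rw [hadef]
          linarith
        have h4 : F j / F j0 ≤ Real.exp (-(R*a)) := by
          rw [h2]; exact Real.exp_le_exp.mpr h3
        exact h1.trans (h4.trans hexpc)
      have hdiff : |f (v j) i - f x i| ≤ 2*M := by
        have h1 := hfM (v j) (hvU j) i
        have h2 := hfM x hx i
        calc |f (v j) i - f x i| ≤ |f (v j) i| + |f x i| := abs_sub _ _
          _ ≤ 2*M := by linarith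
      have h6 : (F j / DF) * |f (v j) i - f x i| ≤ c * (2*M) := by
        apply mul_le_mul hwle hdiff (abs_nonneg _) (le_of_lt hc)
      have h7 : 0 ≤ (F j / DF) * (ε/2) := mul_nonneg (hwnn j) (by linarith)
      linarith
  calc (∑ j, (F j / DF) * |f (v j) i - f x i|)
      ≤ ∑ j, ((F j / DF) * (ε/2) + c * (2*M)) :=
        Finset.sum_le_sum fun j _ => hterm j
    _ = (∑ j, (F j / DF)) * (ε/2) + G * (c * (2*M)) := by
        rw [Finset.sum_add_distrib, ← Finset.sum_mul, Finset.sum_const, Finset.card_univ,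
          Fintype.card_fin, nsmul_eq_mul]
    _ = ε/2 + ε/2 := by
        have hGne : (G:ℝ) ≠ 0 := Nat.cast_ne_zero.mpr hG.ne'
        have hM0 : M ≠ 0 := ne_of_gt hMpos
        have h9 : (4*M*(G:ℝ)) ≠ 0 := by
          refine mul_ne_zero (mul_ne_zero ?_ hM0) hGne
          norm_num
        have h10 : c * (4*M*(G:ℝ)) = ε := by
          rw [hcdef]
          exact div_mul_cancel₀ ε h9
        have h8 : (G:ℝ) * (c * (2*M)) = ε/2 := by
          rw [← h10]; ring
        rw [hwsum, one_mul, h8]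
    _ = ε := by ring
end

section
/- Let U_K, U_Q ⊆ ℝ^m be compact, f : U_K × U_Q → ℝ^k continuous, and ε > 0. Then there exist a positive integer G, points v_0,…,v_{G−1} ∈ ℝ^m and u_0,…,u_{G−1} ∈ ℝ^m, values y_{i,j} ∈ ℝ^k (0 ≤ i,j ≤ G−1), and R > 0 such that for every (x, z) ∈ U_K × U_Q: ‖Σ_{i,j} w_{i,j}(x,z)·y_{i,j} − f(x,z)‖_∞ ≤ ε, where w_{i,j}(x,z) = exp(R(v_iᵀx + u_jᵀz − ½‖v_i‖₂² − ½‖u_j‖₂²)) / Σ_{i',j'} exp(R(v_{i'}ᵀx + u_{j'}ᵀz − ½‖v_{i'}‖₂² − ½‖u_{j'}‖₂²)). -/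
set_option maxHeartbeats 400000

open Finset

/-- A finite net at scale `r` for a nonempty compact set. -/
lemma exists_net_ca {m : ℕ} (s : Set (Fin m → ℝ)) (hs : IsCompact s) (hne : s.Nonempty)
    {r : ℝ} (hr : 0 < r) :
    ∃ (G : ℕ), 0 < G ∧ ∃ v : Fin G → Fin m → ℝ,
      (∀ i, v i ∈ s) ∧ ∀ x ∈ s, ∃ i, dist x (v i) < r := by
  obtain ⟨t, hts, htf, hcov⟩ := hs.finite_cover_balls hr
  have htne : t.Nonempty := by
    obtain ⟨x, hx⟩ := hne
    obtain ⟨c, hc, hxc⟩ := Set.mem_iUnion₂.1 (hcov hx)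
    exact ⟨c, hc⟩
  classical
  set F := htf.toFinset with hF
  have hFne : F.Nonempty := by
    obtain ⟨c, hc⟩ := htne
    exact ⟨c, htf.mem_toFinset.2 hc⟩
  refine ⟨F.card, Finset.card_pos.2 hFne, fun i => (F.equivFin.symm i : _), ?_, ?_⟩
  · intro i
    exact hts (htf.mem_toFinset.1 (F.equivFin.symm i).2)
  · intro x hx
    obtain ⟨c, hc, hxc⟩ := Set.mem_iUnion₂.1 (hcov hx)
    refine ⟨F.equivFin ⟨c, htf.mem_toFinset.2 hc⟩, ?_⟩
    simpa [Metric.mem_ball] using hxc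

/-- Softmax tail bound: if `x` is within `r` of some center but at distance `≥ δ` from `v i`,
then the softmax weight of `i` is at most `exp (-(R * (δ^2/4)))`, provided `m * r^2 ≤ δ^2/2`. -/
lemma softmax_tail_bound_ca {m G : ℕ} (v : Fin G → Fin m → ℝ) (x : Fin m → ℝ)
    {R δ r : ℝ} (hR : 0 < R) (hδ : 0 < δ) (hmr : (m : ℝ) * r ^ 2 ≤ δ ^ 2 / 2)
    (i : Fin G) (hbad : ¬ dist x (v i) < δ)
    (istar : Fin G) (hstar : dist x (v istar) < r) :
    Real.exp (R * ((∑ s, v i s * x s) - (∑ s, v i s ^ 2) / 2)) /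
      (∑ i', Real.exp (R * ((∑ s, v i' s * x s) - (∑ s, v i' s ^ 2) / 2)))
      ≤ Real.exp (-(R * (δ ^ 2 / 4))) := by
  classical
  set sc : Fin G → ℝ := fun i' => (∑ s, v i' s * x s) - (∑ s, v i' s ^ 2) / 2 with hsc
  set E : Fin G → ℝ := fun i' => ∑ s, (x s - v i' s) ^ 2 with hEdef
  have hscE : ∀ i', sc i' = ((∑ s, x s ^ 2) - E i') / 2 := by
    intro i'
    have : E i' = (∑ s, x s ^ 2) - 2 * (∑ s, v i' s * x s) + (∑ s, v i' s ^ 2) := by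
      have h1 : ∀ s : Fin m, (x s - v i' s) ^ 2
          = x s ^ 2 - 2 * (v i' s * x s) + v i' s ^ 2 := fun s => by ring
      simp only [hEdef]
      rw [Finset.sum_congr rfl fun s _ => h1 s]
      rw [Finset.sum_add_distrib, Finset.sum_sub_distrib, ← Finset.mul_sum]
    rw [hsc]
    simp only [this]
    ring
  -- bounds on E
  have hEstar : E istar ≤ (m : ℝ) * r ^ 2 := by
    have : ∀ s : Fin m, (x s - v istar s) ^ 2 ≤ r ^ 2 := by
      intro s
      have h1 : |x s - v istar s| ≤ r := by
        have := dist_le_pi_dist x (v istar) s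
        rw [Real.dist_eq] at this
        exact this.trans hstar.le
      calc (x s - v istar s) ^ 2 = |x s - v istar s| ^ 2 := by rw [sq_abs]
        _ ≤ r ^ 2 := by
            apply pow_le_pow_left₀ (abs_nonneg _) h1
    calc E istar ≤ ∑ _s : Fin m, r ^ 2 := Finset.sum_le_sum fun s _ => this s
      _ = (m : ℝ) * r ^ 2 := by simp [mul_comm]
  have hEi : δ ^ 2 ≤ E i := by
    have : ∃ s : Fin m, δ ≤ |x s - v i s| := by
      by_contra h
      push_neg at h
      apply hbad
      rw [dist_pi_lt_iff hδ]
      intro s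
      rw [Real.dist_eq]
      exact h s
    obtain ⟨s₀, hs₀⟩ := this
    calc δ ^ 2 ≤ |x s₀ - v i s₀| ^ 2 := by
          apply pow_le_pow_left₀ hδ.le hs₀
      _ = (x s₀ - v i s₀) ^ 2 := by rw [sq_abs]
      _ ≤ E i := Finset.single_le_sum (f := fun s => (x s - v i s) ^ 2) (fun s _ => sq_nonneg _) (Finset.mem_univ s₀)
  have hdiff : sc i - sc istar ≤ -(δ ^ 2 / 4) := by
    rw [hscE, hscE]
    have : E istar - E i ≤ -(δ ^ 2 / 2) := by linarith
    linarith
  have hSx : Real.exp (R * sc istar) ≤ ∑ i', Real.exp (R * sc i') :=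
    Finset.single_le_sum (f := fun i' => Real.exp (R * sc i')) (fun i' _ => (Real.exp_pos _).le) (Finset.mem_univ istar)
  have hden : (0:ℝ) < Real.exp (R * sc istar) := Real.exp_pos _
  calc Real.exp (R * sc i) / (∑ i', Real.exp (R * sc i'))
      ≤ Real.exp (R * sc i) / Real.exp (R * sc istar) :=
        div_le_div_of_nonneg_left (Real.exp_pos _).le hden hSx
    _ = Real.exp (R * sc i - R * sc istar) := by rw [Real.exp_sub]
    _ ≤ Real.exp (-(R * (δ ^ 2 / 4))) := by
        apply Real.exp_le_exp.2
        have := mul_le_mul_of_nonneg_left hdiff hR.le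
        calc R * sc i - R * sc istar = R * (sc i - sc istar) := by ring
          _ ≤ R * -(δ ^ 2 / 4) := this
          _ = -(R * (δ ^ 2 / 4)) := by ring


/-- **Core of cross-attention universal approximation.**
For compact `U_K, U_Q ⊆ ℝ^m`, continuous `f : U_K × U_Q → ℝ^k`, and `ε > 0`,
there exist `G > 0`, centers `v_i, u_j ∈ ℝ^m`, values `y_{i,j} ∈ ℝ^k`, and `R > 0`
such that the softmax-weighted combination over all pairs `(i,j)` of the additively
combined scores `v_iᵀx − ½‖v_i‖² + u_jᵀz − ½‖u_j‖²` at inverse temperature `R`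
is uniformly within `ε` of `f` on `U_K × U_Q` in the sup norm. -/
theorem crossattention_core_universal_approximation
    (m k : ℕ) (UK UQ : Set (Fin m → ℝ)) (hUK : IsCompact UK) (hUQ : IsCompact UQ)
    (f : (Fin m → ℝ) → (Fin m → ℝ) → Fin k → ℝ)
    (hf : ContinuousOn (fun p : (Fin m → ℝ) × (Fin m → ℝ) => f p.1 p.2) (UK ×ˢ UQ))
    (ε : ℝ) (hε : 0 < ε) :
    ∃ (G : ℕ), 0 < G ∧
      ∃ (v u : Fin G → Fin m → ℝ) (y : Fin G → Fin G → Fin k → ℝ) (R : ℝ),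
        0 < R ∧
        ∀ x ∈ UK, ∀ z ∈ UQ, ∀ t : Fin k,
          |(∑ i : Fin G, ∑ j : Fin G,
              (Real.exp (R * ((∑ s, v i s * x s) + (∑ s, u j s * z s)
                  - (∑ s, v i s ^ 2) / 2 - (∑ s, u j s ^ 2) / 2)) /
                ∑ i' : Fin G, ∑ j' : Fin G,
                  Real.exp (R * ((∑ s, v i' s * x s) + (∑ s, u j' s * z s)
                    - (∑ s, v i' s ^ 2) / 2 - (∑ s, u j' s ^ 2) / 2)))
                * y i j t)
            - f x z t| ≤ ε := by
  classical
  rcases Set.eq_empty_or_nonempty UK with hKe | hKne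
  · refine ⟨1, one_pos, fun _ _ => 0, fun _ _ => 0, fun _ _ _ => 0, 1, one_pos, ?_⟩
    intro x hx
    rw [hKe] at hx
    exact absurd hx (Set.notMem_empty x)
  rcases Set.eq_empty_or_nonempty UQ with hQe | hQne
  · refine ⟨1, one_pos, fun _ _ => 0, fun _ _ => 0, fun _ _ _ => 0, 1, one_pos, ?_⟩
    intro x _ z hz
    rw [hQe] at hz
    exact absurd hz (Set.notMem_empty z)
  -- uniform bound on f
  obtain ⟨C, hC⟩ := (hUK.prod hUQ).exists_bound_of_continuousOn hf
  set M := max C 0 with hMdef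
  have hM0 : 0 ≤ M := le_max_right _ _
  have hMf : ∀ x ∈ UK, ∀ z ∈ UQ, ∀ t : Fin k, |f x z t| ≤ M := by
    intro x hx z hz t
    have h1 := hC (x, z) (Set.mk_mem_prod hx hz)
    calc |f x z t| = ‖f x z t‖ := (Real.norm_eq_abs _).symm
      _ ≤ ‖f x z‖ := norm_le_pi_norm (f x z) t
      _ ≤ C := h1
      _ ≤ M := le_max_left _ _
  -- uniform continuity
  have huc := (hUK.prod hUQ).uniformContinuousOn_of_continuous hf
  rw [Metric.uniformContinuousOn_iff_le] at huc
  obtain ⟨δ, hδ, hδf⟩ := huc (ε / 2) (half_pos hε)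
  -- net radius
  set r := δ / (m + 1) with hrdef
  have hr : 0 < r := div_pos hδ (by positivity)
  have hmr : (m : ℝ) * r ^ 2 ≤ δ ^ 2 / 2 := by
    have h1 : (0:ℝ) < ((m:ℝ) + 1) ^ 2 := by positivity
    have key : 2 * (m:ℝ) ≤ ((m:ℝ) + 1) ^ 2 := by nlinarith [sq_nonneg ((m:ℝ) - 1)]
    have hδ2 : (0:ℝ) ≤ δ ^ 2 := sq_nonneg δ
    rw [hrdef, div_pow, mul_div_assoc']
    rw [div_le_div_iff₀ h1 two_pos]
    nlinarith
  -- nets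
  obtain ⟨G₁, hG₁, v₁, hv₁s, hv₁c⟩ := exists_net_ca UK hUK hKne hr
  obtain ⟨G₂, hG₂, u₂, hu₂s, hu₂c⟩ := exists_net_ca UQ hUQ hQne hr
  set G := max G₁ G₂ with hGdef
  have hG : 0 < G := lt_of_lt_of_le hG₁ (le_max_left _ _)
  have hG₁le : G₁ ≤ G := le_max_left _ _
  have hG₂le : G₂ ≤ G := le_max_right _ _
  set v : Fin G → Fin m → ℝ :=
    fun i => v₁ (if h : (i : ℕ) < G₁ then ⟨i, h⟩ else ⟨0, hG₁⟩) with hvdef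
  set u : Fin G → Fin m → ℝ :=
    fun j => u₂ (if h : (j : ℕ) < G₂ then ⟨j, h⟩ else ⟨0, hG₂⟩) with hudef
  have hvs : ∀ i, v i ∈ UK := fun i => hv₁s _
  have hus : ∀ j, u j ∈ UQ := fun j => hu₂s _
  have hvc : ∀ x ∈ UK, ∃ i : Fin G, dist x (v i) < r := by
    intro x hx
    obtain ⟨i₁, hi₁⟩ := hv₁c x hx
    refine ⟨Fin.castLE hG₁le i₁, ?_⟩
    have h1 : ((Fin.castLE hG₁le i₁ : Fin G) : ℕ) < G₁ := i₁.2
    have h2 : v (Fin.castLE hG₁le i₁) = v₁ i₁ := by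
      simp only [hvdef]
      rw [dif_pos h1]
      exact congrArg v₁ (Fin.ext rfl)
    rw [h2]
    exact hi₁
  have huc' : ∀ z ∈ UQ, ∃ j : Fin G, dist z (u j) < r := by
    intro z hz
    obtain ⟨j₁, hj₁⟩ := hu₂c z hz
    refine ⟨Fin.castLE hG₂le j₁, ?_⟩
    have h1 : ((Fin.castLE hG₂le j₁ : Fin G) : ℕ) < G₂ := j₁.2
    have h2 : u (Fin.castLE hG₂le j₁) = u₂ j₁ := by
      simp only [hudef]
      rw [dif_pos h1]
      exact congrArg u₂ (Fin.ext rfl)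
    rw [h2]
    exact hj₁
  -- choice of temperature
  set D := 2 * M * (G : ℝ) ^ 2 + 1 with hDdef
  have hD : 0 < D := by positivity
  set c := ε / (2 * D) with hcdef
  have hc : 0 < c := by positivity
  set q := δ ^ 2 / 4 with hqdef
  have hq : 0 < q := by positivity
  set R := max 1 ((-Real.log c) / q) with hRdef
  have hR1 : (1:ℝ) ≤ R := le_max_left _ _
  have hR : 0 < R := lt_of_lt_of_le one_pos hR1
  have hec : Real.exp (-(R * q)) ≤ c := by
    have h1 : (-Real.log c) / q ≤ R := le_max_right _ _
    have h2 : -Real.log c ≤ R * q := (div_le_iff₀ hq).1 h1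
    have h3 : -(R * q) ≤ Real.log c := by linarith
    calc Real.exp (-(R * q)) ≤ Real.exp (Real.log c) := Real.exp_le_exp.2 h3
      _ = c := Real.exp_log hc
  refine ⟨G, hG, v, u, fun i j => f (v i) (u j), R, hR, ?_⟩
  intro x hx z hz t
  have : Nonempty (Fin G) := Fin.pos_iff_nonempty.1 hG
  set ex : Fin G → ℝ :=
    fun i => Real.exp (R * ((∑ s, v i s * x s) - (∑ s, v i s ^ 2) / 2)) with hexdef
  set ez : Fin G → ℝ :=
    fun j => Real.exp (R * ((∑ s, u j s * z s) - (∑ s, u j s ^ 2) / 2)) with hezdef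
  set Sx := ∑ i, ex i with hSxdef
  set Sz := ∑ j, ez j with hSzdef
  have hSx : 0 < Sx := Finset.sum_pos (fun i _ => Real.exp_pos _) Finset.univ_nonempty
  have hSz : 0 < Sz := Finset.sum_pos (fun j _ => Real.exp_pos _) Finset.univ_nonempty
  have hfac : ∀ i j : Fin G,
      Real.exp (R * ((∑ s, v i s * x s) + (∑ s, u j s * z s)
        - (∑ s, v i s ^ 2) / 2 - (∑ s, u j s ^ 2) / 2)) = ex i * ez j := by
    intro i j
    simp only [hexdef, hezdef]
    rw [← Real.exp_add]
    congr 1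
    ring
  have hden : (∑ i' : Fin G, ∑ j' : Fin G,
      Real.exp (R * ((∑ s, v i' s * x s) + (∑ s, u j' s * z s)
        - (∑ s, v i' s ^ 2) / 2 - (∑ s, u j' s ^ 2) / 2))) = Sx * Sz := by
    rw [hSxdef, hSzdef, Finset.sum_mul_sum]
    exact Finset.sum_congr rfl fun i _ => Finset.sum_congr rfl fun j _ => hfac i j
  set a : Fin G → ℝ := fun i => ex i / Sx with hadef
  set b : Fin G → ℝ := fun j => ez j / Sz with hbdef
  have ha0 : ∀ i, 0 ≤ a i := fun i => div_nonneg (Real.exp_pos _).le hSx.le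
  have hb0 : ∀ j, 0 ≤ b j := fun j => div_nonneg (Real.exp_pos _).le hSz.le
  have ha1 : ∑ i, a i = 1 := by
    simp only [hadef]
    rw [← Finset.sum_div, ← hSxdef, div_self hSx.ne']
  have hb1 : ∑ j, b j = 1 := by
    simp only [hbdef]
    rw [← Finset.sum_div, ← hSzdef, div_self hSz.ne']
  have ha_le : ∀ i, a i ≤ 1 := by
    intro i
    rw [hadef]
    rw [div_le_one hSx]
    exact Finset.single_le_sum (f := fun i' => ex i') (fun i' _ => (Real.exp_pos _).le)
      (Finset.mem_univ i)
  have hb_le : ∀ j, b j ≤ 1 := by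
    intro j
    rw [hbdef]
    rw [div_le_one hSz]
    exact Finset.single_le_sum (f := fun j' => ez j') (fun j' _ => (Real.exp_pos _).le)
      (Finset.mem_univ j)
  have hterm : ∀ i j : Fin G,
      Real.exp (R * ((∑ s, v i s * x s) + (∑ s, u j s * z s)
        - (∑ s, v i s ^ 2) / 2 - (∑ s, u j s ^ 2) / 2)) /
      (∑ i' : Fin G, ∑ j' : Fin G,
        Real.exp (R * ((∑ s, v i' s * x s) + (∑ s, u j' s * z s)
          - (∑ s, v i' s ^ 2) / 2 - (∑ s, u j' s ^ 2) / 2))) = a i * b j := by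
    intro i j
    rw [hfac i j, hden]
    simp only [hadef, hbdef]
    rw [div_mul_div_comm]
  have hgoal_eq : (∑ i : Fin G, ∑ j : Fin G,
      (Real.exp (R * ((∑ s, v i s * x s) + (∑ s, u j s * z s)
          - (∑ s, v i s ^ 2) / 2 - (∑ s, u j s ^ 2) / 2)) /
        ∑ i' : Fin G, ∑ j' : Fin G,
          Real.exp (R * ((∑ s, v i' s * x s) + (∑ s, u j' s * z s)
            - (∑ s, v i' s ^ 2) / 2 - (∑ s, u j' s ^ 2) / 2)))
        * f (v i) (u j) t)
      = ∑ i : Fin G, ∑ j : Fin G, a i * b j * f (v i) (u j) t :=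
    Finset.sum_congr rfl fun i _ => Finset.sum_congr rfl fun j _ => by rw [hterm i j]
  have habsum : ∑ i : Fin G, ∑ j : Fin G, a i * b j = 1 := by
    rw [← Finset.sum_mul_sum, ha1, hb1, one_mul]
  have hdiff_eq : (∑ i : Fin G, ∑ j : Fin G, a i * b j * f (v i) (u j) t) - f x z t
      = ∑ i : Fin G, ∑ j : Fin G, a i * b j * (f (v i) (u j) t - f x z t) := by
    have h1 : ∑ i : Fin G, ∑ j : Fin G, a i * b j * (f (v i) (u j) t - f x z t)
        = (∑ i : Fin G, ∑ j : Fin G, a i * b j * f (v i) (u j) t)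
          - (∑ i : Fin G, ∑ j : Fin G, a i * b j) * f x z t := by
      rw [Finset.sum_mul, ← Finset.sum_sub_distrib]
      apply Finset.sum_congr rfl
      intro i _
      rw [Finset.sum_mul, ← Finset.sum_sub_distrib]
      apply Finset.sum_congr rfl
      intro j _
      ring
    rw [h1, habsum, one_mul]
  rw [hgoal_eq, hdiff_eq]
  -- per-term bound
  have hbound : ∀ i j : Fin G, a i * b j * |f (v i) (u j) t - f x z t|
      ≤ ε / 2 * (a i * b j) + Real.exp (-(R * q)) * (2 * M) := by
    intro i j
    have hab_nonneg : 0 ≤ a i * b j := mul_nonneg (ha0 i) (hb0 j)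
    by_cases hgood : dist x (v i) < δ ∧ dist z (u j) < δ
    · have h1 : dist ((v i, u j) : (Fin m → ℝ) × (Fin m → ℝ)) (x, z) ≤ δ := by
        rw [Prod.dist_eq]
        exact max_le (by rw [dist_comm]; exact hgood.1.le) (by rw [dist_comm]; exact hgood.2.le)
      have h2 := hδf (v i, u j) (Set.mk_mem_prod (hvs i) (hus j))
        (x, z) (Set.mk_mem_prod hx hz) h1
      have h3 : |f (v i) (u j) t - f x z t| ≤ ε / 2 := by
        have h4 := dist_le_pi_dist (f (v i) (u j)) (f x z) t
        rw [Real.dist_eq] at h4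
        exact h4.trans h2
      have h5 : (0:ℝ) ≤ Real.exp (-(R * q)) * (2 * M) := mul_nonneg (Real.exp_pos _).le (by linarith)
      calc a i * b j * |f (v i) (u j) t - f x z t|
          ≤ a i * b j * (ε / 2) := mul_le_mul_of_nonneg_left h3 hab_nonneg
        _ = ε / 2 * (a i * b j) := by ring
        _ ≤ ε / 2 * (a i * b j) + Real.exp (-(R * q)) * (2 * M) := le_add_of_nonneg_right h5
    · have habs : |f (v i) (u j) t - f x z t| ≤ 2 * M := by
        have h1 := hMf (v i) (hvs i) (u j) (hus j) t
        have h2 := hMf x hx z hz t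
        calc |f (v i) (u j) t - f x z t|
            ≤ |f (v i) (u j) t| + |f x z t| := abs_sub _ _
          _ ≤ 2 * M := by linarith
      have hab_le : a i * b j ≤ Real.exp (-(R * q)) := by
        rcases not_and_or.1 hgood with hbadx | hbadz
        · obtain ⟨istar, histar⟩ := hvc x hx
          have h1 := softmax_tail_bound_ca v x hR hδ hmr i hbadx istar histar
          calc a i * b j ≤ a i * 1 := mul_le_mul_of_nonneg_left (hb_le j) (ha0 i)
            _ = a i := mul_one _
            _ ≤ Real.exp (-(R * q)) := by
                rw [hqdef]
                simpa [hadef, hSxdef, hexdef] using h1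
        · obtain ⟨jstar, hjstar⟩ := huc' z hz
          have h1 := softmax_tail_bound_ca u z hR hδ hmr j hbadz jstar hjstar
          calc a i * b j ≤ 1 * b j := mul_le_mul_of_nonneg_right (ha_le i) (hb0 j)
            _ = b j := one_mul _
            _ ≤ Real.exp (-(R * q)) := by
                rw [hqdef]
                simpa [hbdef, hSzdef, hezdef] using h1
      have h5 : (0:ℝ) ≤ ε / 2 * (a i * b j) := mul_nonneg (by linarith) hab_nonneg
      calc a i * b j * |f (v i) (u j) t - f x z t|
          ≤ a i * b j * (2 * M) := mul_le_mul_of_nonneg_left habs hab_nonneg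
        _ ≤ Real.exp (-(R * q)) * (2 * M) :=
            mul_le_mul_of_nonneg_right hab_le (by linarith)
        _ ≤ ε / 2 * (a i * b j) + Real.exp (-(R * q)) * (2 * M) := le_add_of_nonneg_left h5
  -- final numeric bound
  have h9 : 2 * M * (G : ℝ) ^ 2 ≤ D := by rw [hDdef]; linarith
  have h10 : Real.exp (-(R * q)) * (2 * M * (G : ℝ) ^ 2) ≤ c * D :=
    mul_le_mul hec h9 (mul_nonneg (by linarith) (sq_nonneg _)) hc.le
  have h11 : c * D = ε / 2 := by
    rw [hcdef]
    field_simp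
  have h12 : (G : ℝ) * (G : ℝ) * (Real.exp (-(R * q)) * (2 * M)) ≤ ε / 2 := by
    calc (G : ℝ) * (G : ℝ) * (Real.exp (-(R * q)) * (2 * M))
        = Real.exp (-(R * q)) * (2 * M * (G : ℝ) ^ 2) := by ring
      _ ≤ c * D := h10
      _ = ε / 2 := h11
  calc |∑ i : Fin G, ∑ j : Fin G, a i * b j * (f (v i) (u j) t - f x z t)|
      ≤ ∑ i : Fin G, ∑ j : Fin G, |a i * b j * (f (v i) (u j) t - f x z t)| := by
        refine (Finset.abs_sum_le_sum_abs _ _).trans ?_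
        exact Finset.sum_le_sum fun i _ => Finset.abs_sum_le_sum_abs _ _
    _ = ∑ i : Fin G, ∑ j : Fin G, a i * b j * |f (v i) (u j) t - f x z t| := by
        refine Finset.sum_congr rfl fun i _ => Finset.sum_congr rfl fun j _ => ?_
        rw [abs_mul, abs_of_nonneg (mul_nonneg (ha0 i) (hb0 j))]
    _ ≤ ∑ i : Fin G, ∑ j : Fin G,
          (ε / 2 * (a i * b j) + Real.exp (-(R * q)) * (2 * M)) :=
        Finset.sum_le_sum fun i _ => Finset.sum_le_sum fun j _ => hbound i j
    _ = ε / 2 * (∑ i : Fin G, ∑ j : Fin G, a i * b j)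
        + (G : ℝ) * (G : ℝ) * (Real.exp (-(R * q)) * (2 * M)) := by
        rw [Finset.sum_congr rfl (fun i (_ : i ∈ Finset.univ) => by
          rw [Finset.sum_add_distrib, ← Finset.mul_sum, Finset.sum_const, Finset.card_univ,
            Fintype.card_fin, nsmul_eq_mul] :
          ∀ i ∈ Finset.univ, (∑ j : Fin G, (ε / 2 * (a i * b j) + Real.exp (-(R * q)) * (2 * M)))
            = ε / 2 * (∑ j : Fin G, a i * b j)
              + (G : ℝ) * (Real.exp (-(R * q)) * (2 * M)))]
        rw [Finset.sum_add_distrib, ← Finset.mul_sum, Finset.sum_const, Finset.card_univ,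
          Fintype.card_fin, nsmul_eq_mul]
        ring
    _ ≤ ε := by
        rw [habsum, mul_one]
        linarith
end

section
/- Let d, n, G be positive integers, R > 0, B₀ > 0, let v_0,…,v_{G−1} ∈ ℝ^{dn}, and let Y_0,…,Y_{G−1} ∈ ℝ^{d×n} be matrices all of whose entries lie in (−B₀, B₀). Then there exist a sum-of-linear-transformations layer Linear : ℝ^{d×n} → ℝ^{(2dG+1)×2dG} and matrices W_K, W_Q ∈ ℝ^{(n+2)×(2dG+1)} (more generally of suitable dimensions), W_V ∈ ℝ^{d×(2dG+1)}, W_O ∈ ℝ^{2dG×n} such that for every Z ∈ ℝ^{d×n}, with Z̃ ∈ ℝ^{dn} the column-stacking of Z: W_V·Linear(Z) · Softmax((W_K·Linear(Z))ᵀ · W_Q·Linear(Z)) · W_O = Σ_{j=0}^{G−1} (exp(R(v_jᵀZ̃ − ½‖v_j‖₂²)) / Σ_{k=0}^{G−1} exp(R(v_kᵀZ̃ − ½‖v_k‖₂²))) · Y_j. -/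
open Matrix

/-- Column stacking of a `d × n` matrix into a vector of length `d*n`:
the entry at index `idx` is `Z (idx % d) (idx / d)`, so the columns
`z_1, …, z_n` are stacked in order. -/
def colStack {d n : ℕ} (hd : 0 < d) (Z : Matrix (Fin d) (Fin n) ℝ) :
    Fin (d * n) → ℝ :=
  fun idx => Z ⟨idx.1 % d, Nat.mod_lt _ hd⟩
    ⟨idx.1 / d, Nat.div_lt_of_lt_mul idx.2⟩


/-!
Index the `2dG` tokens by triples (group `a`, row `ρ`, sign `±`). The linear layer puts the
identity under one extra row carrying, at each token, the score `s_a = R (v_aᵀ Z̃ - ½‖v_a‖²)`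
of its group, and the attention logits at `(i, j)` are chosen to be `s_{a(i)} + log E i j`,
where `E = 2 + [same (a, ρ)] (±)(±)` is a positive kernel whose column sums against any weight
`w` are `4d ∑ₐ wₐ`. Softmax therefore returns `E i j · e^{s_{a(i)}} / (4d ∑ e^{s})`. The value
weights read off `±[ρ = row]`, which kills the constant part `2` of `E` within each group and
keeps only the sign-correlated part; the output weights then read `Y_a` at the `+` tokens.
-/

open Finset

namespace Matrix

theorem _root_.LinearMap.exists_eq_sum_mul_mul {R : Type*} [CommSemiring R] {m n p q : Type*}
    [Fintype m] [Fintype n] [Fintype p] [Fintype q] [DecidableEq m] [DecidableEq n]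
    [DecidableEq p] [DecidableEq q] (f : Matrix m n R →ₗ[R] Matrix p q R) :
    ∃ (H : ℕ) (P : Fin H → Matrix p m R) (Q : Fin H → Matrix n q R),
      ∀ Z, f Z = ∑ h, P h * Z * Q h := by
  let e := Fintype.equivFin (m × n × p × q)
  let P (x : m × n × p × q) : Matrix p m R :=
    single x.2.2.1 x.1 (f (single x.1 x.2.1 1) x.2.2.1 x.2.2.2)
  let Q (x : m × n × p × q) : Matrix n q R := single x.2.1 x.2.2.2 1
  refine ⟨_, fun h => P (e.symm h), fun h => Q (e.symm h), fun Z => ?_⟩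
  rw [e.symm.sum_comp (fun x => P x * Z * Q x)]
  conv_lhs => rw [matrix_eq_sum_single Z]
  simp only [P, Q, single_mul_mul_single, mul_one, Fintype.sum_prod_type, map_sum]
  refine sum_congr rfl fun ρ _ => sum_congr rfl fun c _ => ?_
  have hZ : single ρ c (Z ρ c) = Z ρ c • single ρ c 1 := by
    rw [smul_single, smul_eq_mul, mul_one]
  rw [hZ, map_smul]
  conv_lhs => rw [matrix_eq_sum_single (f (single ρ c 1))]
  simp only [smul_sum, smul_single, smul_eq_mul, mul_comm]

section ConsRow

variable {α n : Type*} {k : ℕ}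

def consRow (x : n → α) (M : Matrix (Fin k) n α) : Matrix (Fin (k + 1)) n α :=
  of (Fin.cons x M)

@[simp] theorem consRow_zero (x : n → α) (M : Matrix (Fin k) n α) : consRow x M 0 = x :=
  rfl

@[simp] theorem consRow_succ (x : n → α) (M : Matrix (Fin k) n α) (i : Fin k) :
    consRow x M i.succ = M i :=
  rfl

theorem consRow_transpose_mul_consRow {R m : Type*} [CommSemiring R] [Fintype m] [Fintype n]
    (x : m → R) (y : n → R) (M : Matrix (Fin k) m R) (N : Matrix (Fin k) n R) :
    (consRow x M)ᵀ * consRow y N = vecMulVec x y + Mᵀ * N := by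
  ext i j
  rw [mul_apply, Fin.sum_univ_succ]
  rfl

theorem consRow_zero_one_transpose_mul_consRow_one {R : Type*} [CommSemiring R]
    (x : Fin k → R) :
    (consRow 0 (1 : Matrix (Fin k) (Fin k) R))ᵀ * consRow x (1 : Matrix (Fin k) (Fin k) R) = 1 := by
  simp [consRow_transpose_mul_consRow]

end ConsRow

end Matrix

theorem softmax_of_add_log {a b : ℕ} (f : Fin a → ℝ) (E : Matrix (Fin a) (Fin b) ℝ)
    (hE : ∀ i j, 0 < E i j) :
    softmax (of fun i j => f i + Real.log (E i j)) =
      of fun i j => Real.exp (f i) * E i j / ∑ k, Real.exp (f k) * E k j := by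
  ext i j
  simp only [softmax, of_apply, Real.exp_add, Real.exp_log (hE _ _)]

namespace SignedPairs

def signOf (b : Bool) : ℝ := if b then 1 else -1

variable {γ δ ν : Type*} [DecidableEq γ] [DecidableEq δ]

variable (γ δ) in
def kernel : Matrix ((γ × δ) × Bool) ((γ × δ) × Bool) ℝ :=
  of fun k l => 2 + if k.1 = l.1 then signOf k.2 * signOf l.2 else 0

variable (δ) in
def weightedKernel (w : γ → ℝ) : Matrix ((γ × δ) × Bool) ((γ × δ) × Bool) ℝ :=
  of fun k l => w k.1.1 * kernel γ δ k l

variable (γ δ) in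
def rowSelector : Matrix δ ((γ × δ) × Bool) ℝ :=
  of fun ρ k => if k.1.2 = ρ then signOf k.2 else 0

def readout (Y : γ → Matrix δ ν ℝ) : Matrix ((γ × δ) × Bool) ν ℝ :=
  of fun k c => if k.2 then Y k.1.1 k.1.2 c else 0

theorem kernel_pos (k l : (γ × δ) × Bool) : 0 < kernel γ δ k l := by
  obtain ⟨x, b⟩ := k
  obtain ⟨y, b'⟩ := l
  simp only [kernel, of_apply]
  split_ifs <;> cases b <;> cases b' <;> norm_num [signOf]

variable [Fintype γ] [Fintype δ]

theorem sum_weightedKernel (w : γ → ℝ) (l : (γ × δ) × Bool) :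
    ∑ k, weightedKernel δ w k l = 4 * Fintype.card δ * ∑ a, w a := by
  obtain ⟨y, b⟩ := l
  have hcell (x : γ × δ) : ∑ b', weightedKernel δ w (x, b') (y, b) = 4 * w x.1 := by
    by_cases h : x = y <;> cases b <;> simp [weightedKernel, kernel, h, signOf] <;> ring
  simp only [Fintype.sum_prod_type, hcell, ← mul_sum, sum_const, card_univ, nsmul_eq_mul]
  ring

theorem rowSelector_mul_weightedKernel (w : γ → ℝ) :
    rowSelector γ δ * weightedKernel δ w =
      (of fun ρ l => if l.1.2 = ρ then 2 * signOf l.2 * w l.1.1 else 0 :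
        Matrix δ ((γ × δ) × Bool) ℝ) := by
  ext ρ ⟨y, b⟩
  have hcell (x : γ × δ) : ∑ b', rowSelector γ δ ρ (x, b') * weightedKernel δ w (x, b') (y, b) =
      if x = y then (if y.2 = ρ then 2 * signOf b * w y.1 else 0) else 0 := by
    rcases eq_or_ne x y with rfl | h
    · by_cases h' : x.2 = ρ <;> cases b <;>
        simp [rowSelector, weightedKernel, kernel, h', signOf] <;> ring
    · simp [rowSelector, weightedKernel, kernel, h, signOf]
  rw [mul_apply, Fintype.sum_prod_type]
  simp only [hcell, sum_ite_eq', mem_univ, if_true, of_apply]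

theorem rowSelector_mul_weightedKernel_mul_readout (w : γ → ℝ) (Y : γ → Matrix δ ν ℝ) :
    rowSelector γ δ * weightedKernel δ w * readout Y = (2 : ℝ) • ∑ a, w a • Y a := by
  rw [rowSelector_mul_weightedKernel]
  ext ρ c
  simp [mul_apply, readout, Fintype.sum_prod_type, Matrix.sum_apply, signOf, mul_sum, mul_assoc]

theorem rowSelector_mul_softmax_mul_readout {m : ℕ} (τ : Fin m ≃ (γ × δ) × Bool) (f : γ → ℝ)
    (Y : γ → Matrix δ ν ℝ) :
    (rowSelector γ δ).submatrix id τ *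
        softmax (of fun i j => f (τ i).1.1 + Real.log (kernel γ δ (τ i) (τ j))) *
        ((2 * Fintype.card δ : ℝ) • readout Y).submatrix τ id =
      ∑ a, (Real.exp (f a) / ∑ b, Real.exp (f b)) • Y a := by
  rcases isEmpty_or_nonempty δ with hδ | hδ
  · ext ρ
    exact isEmptyElim ρ
  set w := fun a => Real.exp (f a)
  have hS : softmax (of fun i j => f (τ i).1.1 + Real.log (kernel γ δ (τ i) (τ j))) =
      ((4 * Fintype.card δ * ∑ a, w a)⁻¹ • weightedKernel δ w).submatrix τ τ := by
    rw [softmax_of_add_log _ _ fun i j => kernel_pos _ _]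
    ext i j
    have hden : ∑ k, Real.exp (f (τ k).1.1) * kernel γ δ (τ k) (τ j) =
        4 * Fintype.card δ * ∑ a, w a :=
      (τ.sum_comp fun k => weightedKernel δ w k (τ j)).trans (sum_weightedKernel w (τ j))
    simp only [of_apply, hden, submatrix_apply, Matrix.smul_apply, weightedKernel, smul_eq_mul, w]
    ring
  have hcoef : 2 * Fintype.card δ * (4 * Fintype.card δ * ∑ a, w a)⁻¹ * 2 = (∑ a, w a)⁻¹ := by
    have hcard : (Fintype.card δ : ℝ) ≠ 0 := Nat.cast_ne_zero.mpr Fintype.card_ne_zero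
    rw [mul_inv]
    field_simp
    norm_num
  rw [hS, submatrix_mul_equiv, submatrix_mul_equiv, submatrix_id_id]
  simp only [Matrix.mul_smul, Matrix.smul_mul]
  rw [rowSelector_mul_weightedKernel_mul_readout, smul_smul, smul_smul, hcoef, smul_sum]
  simp only [smul_smul, div_eq_inv_mul, w]

end SignedPairs

def scoreRowLinearMap {d n G k : ℕ} (hd : 0 < d) (v : Fin G → Fin (d * n) → ℝ)
    (g : Fin k → Fin G) (R : ℝ) :
    Matrix (Fin d) (Fin n) ℝ →ₗ[ℝ] Matrix (Fin (k + 1)) (Fin k) ℝ where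
  toFun Z := consRow (fun i => R * ∑ t, v (g i) t * colStack hd Z t) 0
  map_add' Z Z' := by
    ext β i
    refine Fin.cases ?_ (fun β => ?_) β
    · simp [colStack, mul_add, sum_add_distrib]
    · simp
  map_smul' c Z := by
    ext β i
    refine Fin.cases ?_ (fun β => ?_) β
    · simp [colStack, mul_sum, mul_left_comm]
    · simp

theorem scoreRowLinearMap_add_consRow {d n G k : ℕ} (hd : 0 < d) (v : Fin G → Fin (d * n) → ℝ)
    (g : Fin k → Fin G) (R : ℝ) (Z : Matrix (Fin d) (Fin n) ℝ) :
    scoreRowLinearMap hd v g R Z + consRow (fun i => -(R * ((∑ t, v (g i) t ^ 2) / 2))) 1 =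
      consRow (fun i => R * ((∑ t, v (g i) t * colStack hd Z t) - (∑ t, v (g i) t ^ 2) / 2))
        (1 : Matrix (Fin k) (Fin k) ℝ) := by
  ext β i
  refine Fin.cases ?_ (fun β => ?_) β
  · simp [scoreRowLinearMap]
    ring
  · simp [scoreRowLinearMap]

theorem selfattention_realizes_softmax_mixture_general
    (d n G : ℕ) (hd : 0 < d)
    (R : ℝ)
    (v : Fin G → Fin (d * n) → ℝ)
    (Y : Fin G → Matrix (Fin d) (Fin n) ℝ) :
    ∃ (H : ℕ) (P : Fin H → Matrix (Fin (2 * d * G + 1)) (Fin d) ℝ)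
      (Q : Fin H → Matrix (Fin n) (Fin (2 * d * G)) ℝ)
      (Rb : Matrix (Fin (2 * d * G + 1)) (Fin (2 * d * G)) ℝ)
      (dA : ℕ) (WK WQ : Matrix (Fin dA) (Fin (2 * d * G + 1)) ℝ)
      (WV : Matrix (Fin d) (Fin (2 * d * G + 1)) ℝ)
      (WO : Matrix (Fin (2 * d * G)) (Fin n) ℝ),
      ∀ Z : Matrix (Fin d) (Fin n) ℝ,
        WV * (∑ i, P i * Z * Q i + Rb) *
            softmax ((WK * (∑ i, P i * Z * Q i + Rb))ᵀ *
              (WQ * (∑ i, P i * Z * Q i + Rb))) * WO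
          = ∑ j : Fin G,
              (Real.exp (R * ((∑ t, v j t * colStack hd Z t) - (∑ t, v j t ^ 2) / 2)) /
                ∑ j' : Fin G,
                  Real.exp (R * ((∑ t, v j' t * colStack hd Z t)
                    - (∑ t, v j' t ^ 2) / 2))) • Y j := by
  let τ : Fin (2 * d * G) ≃ (Fin G × Fin d) × Bool := Fintype.equivOfCardEq (by simp; ring)
  let group (i : Fin (2 * d * G)) : Fin G := (τ i).1.1
  obtain ⟨H, P, Q, hPQ⟩ := (scoreRowLinearMap hd v group R).exists_eq_sum_mul_mul
  obtain ⟨drop, hdrop⟩ : ∃ D : Matrix (Fin (2 * d * G)) (Fin (2 * d * G + 1)) ℝ,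
      ∀ x, D * consRow x (1 : Matrix (Fin (2 * d * G)) (Fin (2 * d * G)) ℝ) = 1 :=
    ⟨_, consRow_zero_one_transpose_mul_consRow_one⟩
  refine ⟨H, P, Q, consRow (fun i => -(R * ((∑ t, v (group i) t ^ 2) / 2))) 1, _, 1,
    consRow 1 (((SignedPairs.kernel (Fin G) (Fin d)).submatrix τ τ).map Real.log) * drop,
    (SignedPairs.rowSelector (Fin G) (Fin d)).submatrix id τ * drop,
    ((2 * Fintype.card (Fin d) : ℝ) • SignedPairs.readout Y).submatrix τ id, fun Z => ?_⟩
  rw [← hPQ, scoreRowLinearMap_add_consRow, Matrix.one_mul, Matrix.mul_assoc _ drop, hdrop,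
    Matrix.mul_one, Matrix.mul_assoc _ drop, hdrop, Matrix.mul_one, consRow_transpose_mul_consRow]
  convert SignedPairs.rowSelector_mul_softmax_mul_readout τ
    (fun a => R * ((∑ t, v a t * colStack hd Z t) - (∑ t, v a t ^ 2) / 2)) Y using 4
  ext i j
  simp [group]

/-- **Single-head self-attention exactly realizes a softmax mixture of fixed matrices.**
Given `R > 0`, centers `v_0,…,v_{G−1} ∈ ℝ^{dn}` and matrices `Y_j ∈ ℝ^{d×n}` with
entries in `(−B₀, B₀)`, there are a sum-of-linear-transformations layer
`Linear : ℝ^{d×n} → ℝ^{(2dG+1)×2dG}` and weights `W_K, W_Q, W_V, W_O` such that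
for every `Z`, the attention output
`W_V·Linear(Z)·Softmax((W_K·Linear(Z))ᵀ·(W_Q·Linear(Z)))·W_O` equals
`∑_j softmaxweight_j(Z̃) · Y_j`, with weights from scores `v_jᵀZ̃ − ½‖v_j‖²` at
inverse temperature `R`, `Z̃` the column stacking of `Z`. -/
theorem selfattention_realizes_softmax_mixture
    (d n G : ℕ) (hd : 0 < d) (hn : 0 < n) (hG : 0 < G)
    (R B₀ : ℝ) (hR : 0 < R) (hB₀ : 0 < B₀)
    (v : Fin G → Fin (d * n) → ℝ)
    (Y : Fin G → Matrix (Fin d) (Fin n) ℝ)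
    (hY : ∀ j r c, -B₀ < Y j r c ∧ Y j r c < B₀) :
    ∃ (H : ℕ) (P : Fin H → Matrix (Fin (2 * d * G + 1)) (Fin d) ℝ)
      (Q : Fin H → Matrix (Fin n) (Fin (2 * d * G)) ℝ)
      (Rb : Matrix (Fin (2 * d * G + 1)) (Fin (2 * d * G)) ℝ)
      (dA : ℕ) (WK WQ : Matrix (Fin dA) (Fin (2 * d * G + 1)) ℝ)
      (WV : Matrix (Fin d) (Fin (2 * d * G + 1)) ℝ)
      (WO : Matrix (Fin (2 * d * G)) (Fin n) ℝ),
      ∀ Z : Matrix (Fin d) (Fin n) ℝ,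
        WV * (∑ i, P i * Z * Q i + Rb) *
            softmax ((WK * (∑ i, P i * Z * Q i + Rb))ᵀ *
              (WQ * (∑ i, P i * Z * Q i + Rb))) * WO
          = ∑ j : Fin G,
              (Real.exp (R * ((∑ t, v j t * colStack hd Z t) - (∑ t, v j t ^ 2) / 2)) /
                ∑ j' : Fin G,
                  Real.exp (R * ((∑ t, v j' t * colStack hd Z t)
                    - (∑ t, v j' t ^ 2) / 2))) • Y j :=
  selfattention_realizes_softmax_mixture_general d n G hd R v Y
end

section
/- Let d, n be positive integers, let U ⊂ ℝ^{d×n} be compact, let f : U → ℝ^{d×n} be continuous, and let ε > 0. Then there exist a sum-of-linear-transformations layer Linear : ℝ^{d×n} → ℝ^{M₁×M₂} (for some dimensions M₁, M₂) and a single-head self-attention layer Attn with weight matrices W_K, W_Q, W_V, W_O of suitable dimensions, such that for every Z ∈ U: ‖W_V·Linear(Z) · Softmax((W_K·Linear(Z))ᵀ · W_Q·Linear(Z)) · W_O − f(Z)‖_∞ ≤ ε. Equivalently, ‖f − Attn ∘ Linear‖_{L∞(U)} ≤ ε. -/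
open Matrix

noncomputable section AttnAux




/-- value of an "exponential of linear functional" -/
def expLin {d n : ℕ} (C : Matrix (Fin d) (Fin n) ℝ) (Z : Matrix (Fin d) (Fin n) ℝ) : ℝ :=
  Real.exp (∑ a, ∑ b, C a b * Z a b)

lemma continuous_expLin {d n : ℕ} (C : Matrix (Fin d) (Fin n) ℝ) : Continuous (expLin C) := by
  apply Real.continuous_exp.comp
  apply continuous_finset_sum
  intro a _
  apply continuous_finset_sum
  intro b _
  exact continuous_const.mul ((continuous_apply b).comp (continuous_apply a))

lemma sw_repr (d n : ℕ)
    (U : Set (Matrix (Fin d) (Fin n) ℝ)) (hU : IsCompact U)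
    (f : Matrix (Fin d) (Fin n) ℝ → Matrix (Fin d) (Fin n) ℝ)
    (hf : ContinuousOn f U) (δ : ℝ) (hδ : 0 < δ) (r : Fin d) (c : Fin n) :
    ∃ (k : ℕ) (w : Fin k → ℝ) (C : Fin k → Matrix (Fin d) (Fin n) ℝ),
      ∀ Z ∈ U, |(∑ p, w p * expLin (C p) Z) - f Z r c| ≤ δ := by
  haveI : CompactSpace ↥U := isCompact_iff_compactSpace.mp hU
  -- generators
  set gen : Matrix (Fin d) (Fin n) ℝ → C(↥U, ℝ) :=
    fun C => ⟨fun x => expLin C x.1, (continuous_expLin C).comp continuous_subtype_val⟩ with hgen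
  set SA : Subalgebra ℝ C(↥U, ℝ) := Algebra.adjoin ℝ (Set.range gen) with hSA
  have hsep : SA.SeparatesPoints := by
    intro x y hxy
    obtain ⟨a, b, hab⟩ : ∃ a b, x.1 a b ≠ y.1 a b := by
      by_contra h
      push_neg at h
      exact hxy (Subtype.ext (by funext a b; exact h a b))
    refine ⟨gen (Matrix.of fun a' b' => if a' = a ∧ b' = b then 1 else 0),
      ⟨_, Algebra.subset_adjoin ⟨_, rfl⟩, rfl⟩, ?_⟩
    have hval : ∀ M : Matrix (Fin d) (Fin n) ℝ,
        (∑ a', ∑ b', (Matrix.of fun a' b' => if a' = a ∧ b' = b then (1:ℝ) else 0) a' b' * M a' b')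
          = M a b := by
      intro M
      rw [Finset.sum_eq_single a]
      · rw [Finset.sum_eq_single b]
        · simp
        · intro b' _ hb'; simp [hb']
        · simp
      · intro a' _ ha'
        apply Finset.sum_eq_zero; intro b' _; simp [ha']
      · simp
    simp only [hgen, ContinuousMap.coe_mk, expLin, hval]
    exact fun h => hab (Real.exp_injective h)
  have htop := ContinuousMap.subalgebra_topologicalClosure_eq_top_of_separatesPoints SA hsep
  -- the target function as a continuous map
  set fRc : C(↥U, ℝ) := ⟨fun x => f x.1 r c,
    (continuous_apply c).comp ((continuous_apply r).comp hf.restrict)⟩ with hfRc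
  have hmem : fRc ∈ closure (SA : Set C(↥U, ℝ)) := by
    have : fRc ∈ SA.topologicalClosure := by rw [htop]; trivial
    exact this
  obtain ⟨g, hgSA, hgdist⟩ := Metric.mem_closure_iff.mp hmem δ hδ
  -- representation of g
  have hrep : ∀ x ∈ SA, ∃ (k : ℕ) (w : Fin k → ℝ) (C : Fin k → Matrix (Fin d) (Fin n) ℝ),
      ∀ u : ↥U, x u = ∑ p, w p * expLin (C p) u.1 := by
    intro x hx
    induction hx using Algebra.adjoin_induction with
    | mem x hx =>
      obtain ⟨C, rfl⟩ := hx
      exact ⟨1, fun _ => 1, fun _ => C, fun u => by simp [hgen]⟩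
    | algebraMap t =>
      refine ⟨1, fun _ => t, fun _ => 0, fun u => by simp [expLin]⟩
    | add x y hx hy ihx ihy =>
      obtain ⟨k₁, w₁, C₁, h₁⟩ := ihx
      obtain ⟨k₂, w₂, C₂, h₂⟩ := ihy
      refine ⟨k₁ + k₂, Fin.addCases w₁ w₂, Fin.addCases C₁ C₂, fun u => ?_⟩
      rw [Fin.sum_univ_add]
      simp only [Fin.addCases_left, Fin.addCases_right]
      simp [h₁ u, h₂ u]
    | mul x y hx hy ihx ihy =>
      obtain ⟨k₁, w₁, C₁, h₁⟩ := ihx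
      obtain ⟨k₂, w₂, C₂, h₂⟩ := ihy
      refine ⟨k₁ * k₂,
        fun q => w₁ (finProdFinEquiv.symm q).1 * w₂ (finProdFinEquiv.symm q).2,
        fun q => C₁ (finProdFinEquiv.symm q).1 + C₂ (finProdFinEquiv.symm q).2,
        fun u => ?_⟩
      have := Equiv.sum_comp finProdFinEquiv
        (fun q : Fin (k₁ * k₂) => w₁ (finProdFinEquiv.symm q).1 * w₂ (finProdFinEquiv.symm q).2
          * expLin (C₁ (finProdFinEquiv.symm q).1 + C₂ (finProdFinEquiv.symm q).2) u.1)
      rw [← this]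
      simp only [Equiv.symm_apply_apply]
      rw [Fintype.sum_prod_type]
      have hexp : ∀ (i : Fin k₁) (j : Fin k₂),
          expLin (C₁ i + C₂ j) u.1 = expLin (C₁ i) u.1 * expLin (C₂ j) u.1 := by
        intro i j
        simp only [expLin, ← Real.exp_add, ← Finset.sum_add_distrib, Matrix.add_apply, add_mul]
      simp only [hexp]
      rw [ContinuousMap.mul_apply, h₁ u, h₂ u, Finset.sum_mul_sum]
      ring_nf
      apply Finset.sum_congr rfl; intro i _
      apply Finset.sum_congr rfl; intro j _
      ring
  obtain ⟨k, w, C, hC⟩ := hrep g hgSA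
  refine ⟨k, w, C, fun Z hZ => ?_⟩
  have h1 : (∑ p, w p * expLin (C p) Z) = g ⟨Z, hZ⟩ := (hC ⟨Z, hZ⟩).symm
  rw [h1]
  have h2 := ContinuousMap.dist_apply_le_dist (f := g) (g := fRc) ⟨Z, hZ⟩
  have : |g ⟨Z, hZ⟩ - f Z r c| = dist (g ⟨Z, hZ⟩) (fRc ⟨Z, hZ⟩) := by
    rw [Real.dist_eq]; rfl
  rw [this]
  exact h2.trans (by rw [dist_comm] at hgdist; exact hgdist.le)

lemma sw_repr_uniform (d n : ℕ)
    (U : Set (Matrix (Fin d) (Fin n) ℝ)) (hU : IsCompact U)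
    (f : Matrix (Fin d) (Fin n) ℝ → Matrix (Fin d) (Fin n) ℝ)
    (hf : ContinuousOn f U) (δ : ℝ) (hδ : 0 < δ) :
    ∃ (Pn : ℕ) (w : Fin d → Fin n → Fin Pn → ℝ)
      (C : Fin d → Fin n → Fin Pn → Matrix (Fin d) (Fin n) ℝ),
      ∀ Z ∈ U, ∀ r c,
        |(∑ p, w r c p * expLin (C r c p) Z) - f Z r c| ≤ δ := by
  choose k w C h using fun r c => sw_repr d n U hU f hf δ hδ r c
  set Pn : ℕ := Finset.univ.sup fun r => Finset.univ.sup fun c => k r c with hPn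
  have hk : ∀ r c, k r c ≤ Pn := by
    intro r c
    rw [hPn]
    exact le_trans (Finset.le_sup (Finset.mem_univ c))
      (Finset.le_sup (f := fun r => Finset.univ.sup fun c => k r c) (Finset.mem_univ r))
  refine ⟨Pn,
    fun r c p => if h : (p : ℕ) < k r c then w r c ⟨p, h⟩ else 0,
    fun r c p => if h : (p : ℕ) < k r c then C r c ⟨p, h⟩ else 0,
    fun Z hZ r c => ?_⟩
  have key : (∑ p : Fin Pn,
      (if h : (p : ℕ) < k r c then w r c ⟨p, h⟩ else 0) *
        expLin (if h : (p : ℕ) < k r c then C r c ⟨p, h⟩ else 0) Z)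
      = ∑ p, w r c p * expLin (C r c p) Z := by
    set g : ℕ → ℝ := fun i =>
      if h : i < k r c then w r c ⟨i, h⟩ * expLin (C r c ⟨i, h⟩) Z else 0 with hg
    have l1 : (∑ p : Fin Pn,
        (if h : (p : ℕ) < k r c then w r c ⟨p, h⟩ else 0) *
          expLin (if h : (p : ℕ) < k r c then C r c ⟨p, h⟩ else 0) Z)
        = ∑ i ∈ Finset.range Pn, g i := by
      rw [Finset.sum_range fun i => g i]
      apply Finset.sum_congr rfl
      intro p _
      by_cases hp : (p : ℕ) < k r c
      · simp [hg, hp]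
      · simp [hg, hp]
    have l2 : (∑ i ∈ Finset.range (k r c), g i) = ∑ p, w r c p * expLin (C r c p) Z := by
      rw [Finset.sum_range fun i => g i]
      apply Finset.sum_congr rfl
      intro p _
      simp [hg, p.isLt]
    rw [l1, ← l2]
    exact (Finset.sum_subset (Finset.range_subset_range.mpr (hk r c))
      (fun i _ hi => by simp only [hg]; rw [dif_neg (by simpa using hi)])).symm
  rw [key]
  exact h r c Z hZ




/-- key-weight constant matrix -/
def Umat (N : ℕ) (A lM : ℝ) : Matrix (Fin (N+1)) (Fin (N+1)) ℝ :=
  Matrix.of fun t i =>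
    Fin.lastCases (Fin.lastCases 0 (fun _ => lM) t)
      (fun i₀ => Fin.lastCases 1 (fun t₀ => A * ((if t₀ = i₀ then (1:ℝ) else 0) - 1)) t) i

/-- query-side matrix, depending on the scalar values `ℓ j₀` -/
def VvM (N : ℕ) (ℓ : Fin N → ℝ) : Matrix (Fin (N+1)) (Fin (N+1)) ℝ :=
  Matrix.of fun t j =>
    Fin.lastCases 0
      (fun j₀ => Fin.lastCases (ℓ j₀) (fun t₀ => if t₀ = j₀ then (1:ℝ) else 0) t) j

def VmM (N d : ℕ) (rsel : Fin N → Fin d) (v : Fin N → ℝ) : Matrix (Fin d) (Fin (N+1)) ℝ :=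
  Matrix.of fun r i => Fin.lastCases 0 (fun i₀ => if rsel i₀ = r then v i₀ else 0) i

def WOM (N n : ℕ) (csel : Fin N → Fin n) : Matrix (Fin (N+1)) (Fin n) ℝ :=
  Matrix.of fun j c => Fin.lastCases 0 (fun j₀ => if csel j₀ = c then (1:ℝ) else 0) j

variable {N : ℕ} {A lM : ℝ} {ℓ : Fin N → ℝ}

lemma S_last (i : Fin (N+1)) : ((Umat N A lM)ᵀ * VvM N ℓ) i (Fin.last N) = 0 := by
  rw [Matrix.mul_apply]
  apply Finset.sum_eq_zero
  intro t _
  simp [VvM, Umat]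

lemma S_pad (j₀ : Fin N) :
    ((Umat N A lM)ᵀ * VvM N ℓ) (Fin.last N) j₀.castSucc = lM := by
  rw [Matrix.mul_apply]
  rw [Fin.sum_univ_castSucc]
  simp only [Matrix.transpose_apply, Umat, VvM, Matrix.of_apply,
    Fin.lastCases_castSucc, Fin.lastCases_last, mul_ite, mul_one, mul_zero]
  simp [Finset.sum_ite_eq']

lemma S_data (i₀ j₀ : Fin N) :
    ((Umat N A lM)ᵀ * VvM N ℓ) i₀.castSucc j₀.castSucc
      = A * ((if j₀ = i₀ then (1:ℝ) else 0) - 1) + ℓ j₀ := by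
  rw [Matrix.mul_apply]
  rw [Fin.sum_univ_castSucc]
  simp only [Matrix.transpose_apply, Umat, VvM, Matrix.of_apply,
    Fin.lastCases_castSucc, Fin.lastCases_last, mul_ite, mul_one, mul_zero, one_mul]
  rw [Finset.sum_ite_eq' Finset.univ j₀ (fun t₀ => A * ((if t₀ = i₀ then (1:ℝ) else 0) - 1))]
  simp [add_comm]

lemma output_eq (d n : ℕ) (rsel : Fin N → Fin d) (csel : Fin N → Fin n)
    (v : Fin N → ℝ) (S : Matrix (Fin (N+1)) (Fin (N+1)) ℝ) (r : Fin d) (c : Fin n) :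
    (VmM N d rsel v * softmax S * WOM N n csel) r c
      = ∑ j₀ : Fin N, ∑ i₀ : Fin N,
          (if rsel i₀ = r then v i₀ else 0) *
            (Real.exp (S i₀.castSucc j₀.castSucc) / ∑ k, Real.exp (S k j₀.castSucc)) *
            (if csel j₀ = c then (1:ℝ) else 0) := by
  rw [Matrix.mul_apply]
  rw [Fin.sum_univ_castSucc]
  have hlast : (VmM N d rsel v * softmax S) r (Fin.last N) * WOM N n csel (Fin.last N) c = 0 := by
    simp [WOM]
  rw [hlast, add_zero]
  apply Finset.sum_congr rfl
  intro j₀ _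
  rw [Matrix.mul_apply, Fin.sum_univ_castSucc]
  simp only [VmM, Matrix.of_apply, Fin.lastCases_last, zero_mul, add_zero, WOM,
    Fin.lastCases_castSucc, softmax]
  rw [Finset.sum_mul]


lemma attn_error (N : ℕ) (d n : ℕ) (r : Fin d) (c : Fin n)
    (rsel : Fin N → Fin d) (csel : Fin N → Fin n)
    (wv : Fin N → ℝ) (ℓ : Fin N → ℝ) (A B M₀ Wb ε : ℝ)
    (hε : 0 < ε) (hA : 0 ≤ A) (hM₀ : 1 ≤ M₀) (hWb : 0 < Wb) (hB : 0 ≤ B)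
    (hℓ : ∀ j₀, |ℓ j₀| ≤ B) (hw : ∀ i₀, |wv i₀| ≤ Wb)
    (hAe : Real.exp (B - A) ≤ ε / (4 * (N:ℝ)^2 * Wb + 1))
    (hM₀e : (N:ℝ)^2 * Wb * Real.exp (2*B) / M₀ ≤ ε / 4) :
    |(∑ j₀ : Fin N, ∑ i₀ : Fin N,
        (if rsel i₀ = r then M₀ * wv i₀ else 0) *
          (Real.exp (A * ((if j₀ = i₀ then (1:ℝ) else 0) - 1) + ℓ j₀) /
            ((∑ k₀ : Fin N, Real.exp (A * ((if j₀ = k₀ then (1:ℝ) else 0) - 1) + ℓ j₀)) + M₀)) *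
          (if csel j₀ = c then (1:ℝ) else 0))
      - ∑ j₀ : Fin N, (if rsel j₀ = r ∧ csel j₀ = c then wv j₀ * Real.exp (ℓ j₀) else 0)|
      ≤ ε / 2 := by
  have hM₀pos : (0:ℝ) < M₀ := lt_of_lt_of_le one_pos hM₀
  set Dq : Fin N → ℝ :=
    fun j₀ => (∑ k₀ : Fin N, Real.exp (A * ((if j₀ = k₀ then (1:ℝ) else 0) - 1) + ℓ j₀)) + M₀
    with hDq
  set G : Fin N → Fin N → ℝ := fun i₀ j₀ =>
    (if rsel i₀ = r then M₀ * wv i₀ else 0) *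
      (Real.exp (A * ((if j₀ = i₀ then (1:ℝ) else 0) - 1) + ℓ j₀) / Dq j₀) *
      (if csel j₀ = c then (1:ℝ) else 0) with hG
  set Tt : Fin N → ℝ :=
    fun j₀ => if rsel j₀ = r ∧ csel j₀ = c then wv j₀ * Real.exp (ℓ j₀) else 0 with hTt
  have hDpos : ∀ j₀, 0 < Dq j₀ := fun j₀ =>
    add_pos_of_nonneg_of_pos (Finset.sum_nonneg fun _ _ => (Real.exp_pos _).le) hM₀pos
  have hDge : ∀ j₀, M₀ ≤ Dq j₀ := fun j₀ =>
    le_add_of_nonneg_left (Finset.sum_nonneg fun _ _ => (Real.exp_pos _).le)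
  have hexple : ∀ (j₀ i₀ : Fin N),
      Real.exp (A * ((if j₀ = i₀ then (1:ℝ) else 0) - 1) + ℓ j₀) ≤ Real.exp B := by
    intro j₀ i₀
    apply Real.exp_le_exp.mpr
    have h1 : A * ((if j₀ = i₀ then (1:ℝ) else 0) - 1) ≤ 0 := by
      apply mul_nonpos_of_nonneg_of_nonpos hA
      split <;> norm_num
    have h2 : ℓ j₀ ≤ B := le_trans (le_abs_self _) (hℓ j₀)
    linarith
  have hDsub : ∀ j₀, Dq j₀ - M₀ ≤ (N:ℝ) * Real.exp B := by
    intro j₀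
    have : Dq j₀ - M₀ = ∑ k₀ : Fin N,
        Real.exp (A * ((if j₀ = k₀ then (1:ℝ) else 0) - 1) + ℓ j₀) := by
      rw [hDq]; ring
    rw [this]
    calc (∑ k₀ : Fin N, Real.exp (A * ((if j₀ = k₀ then (1:ℝ) else 0) - 1) + ℓ j₀))
        ≤ ∑ _k₀ : Fin N, Real.exp B := Finset.sum_le_sum fun k₀ _ => hexple j₀ k₀
      _ = (N:ℝ) * Real.exp B := by simp [Finset.sum_const, mul_comm]
  -- bounds for single terms
  set βd : ℝ := Wb * Real.exp B * ((N:ℝ) * Real.exp B / M₀) with hβd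
  set βo : ℝ := Wb * Real.exp (B - A) with hβo
  have hβdnn : 0 ≤ βd := by positivity
  have hβonn : 0 ≤ βo := by positivity
  have hdiag : ∀ j₀, |G j₀ j₀ - Tt j₀| ≤ βd := by
    intro j₀
    by_cases hr : rsel j₀ = r
    · by_cases hc : csel j₀ = c
      · have hGd : G j₀ j₀ = wv j₀ * Real.exp (ℓ j₀) * (M₀ / Dq j₀) := by
          show (if rsel j₀ = r then M₀ * wv j₀ else 0) *
              (Real.exp (A * ((if j₀ = j₀ then (1:ℝ) else 0) - 1) + ℓ j₀) / Dq j₀) *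
              (if csel j₀ = c then (1:ℝ) else 0) = _
          rw [if_pos hr, if_pos hc, if_pos rfl]
          have h0 : A * ((1:ℝ) - 1) + ℓ j₀ = ℓ j₀ := by ring
          rw [h0]; ring
        have hTd : Tt j₀ = wv j₀ * Real.exp (ℓ j₀) := by
          show (if rsel j₀ = r ∧ csel j₀ = c then wv j₀ * Real.exp (ℓ j₀) else 0) = _
          rw [if_pos ⟨hr, hc⟩]
        rw [hGd, hTd]
        have heq : wv j₀ * Real.exp (ℓ j₀) * (M₀ / Dq j₀) - wv j₀ * Real.exp (ℓ j₀)
            = (wv j₀ * Real.exp (ℓ j₀)) * (M₀ / Dq j₀ - 1) := by ring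
        rw [heq, abs_mul]
        have h1 : |wv j₀ * Real.exp (ℓ j₀)| ≤ Wb * Real.exp B := by
          rw [abs_mul, abs_of_pos (Real.exp_pos _)]
          exact mul_le_mul (hw j₀) (Real.exp_le_exp.mpr (le_trans (le_abs_self _) (hℓ j₀)))
            (Real.exp_pos _).le hWb.le
        have h2 : |M₀ / Dq j₀ - 1| ≤ (N:ℝ) * Real.exp B / M₀ := by
          have hle1 : M₀ / Dq j₀ ≤ 1 := (div_le_one (hDpos j₀)).mpr (hDge j₀)
          rw [abs_of_nonpos (by linarith)]
          have hDne : Dq j₀ ≠ 0 := (hDpos j₀).ne'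
          have : -(M₀ / Dq j₀ - 1) = (Dq j₀ - M₀) / Dq j₀ := by
            rw [sub_div, div_self hDne]; ring
          rw [this]
          exact div_le_div₀ (by positivity) (hDsub j₀) hM₀pos (hDge j₀)
        calc |wv j₀ * Real.exp (ℓ j₀)| * |M₀ / Dq j₀ - 1|
            ≤ (Wb * Real.exp B) * ((N:ℝ) * Real.exp B / M₀) :=
              mul_le_mul h1 h2 (abs_nonneg _) (by positivity)
          _ = βd := by rw [hβd]
      · have hG0 : G j₀ j₀ = 0 := by
          show _ * _ * (if csel j₀ = c then (1:ℝ) else 0) = 0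
          rw [if_neg hc, mul_zero]
        have hT0 : Tt j₀ = 0 := by
          show (if rsel j₀ = r ∧ csel j₀ = c then wv j₀ * Real.exp (ℓ j₀) else 0) = 0
          rw [if_neg (by tauto)]
        rw [hG0, hT0]
        simpa using hβdnn
    · have hG0 : G j₀ j₀ = 0 := by
        show (if rsel j₀ = r then M₀ * wv j₀ else 0) * _ * _ = 0
        rw [if_neg hr, zero_mul, zero_mul]
      have hT0 : Tt j₀ = 0 := by
        show (if rsel j₀ = r ∧ csel j₀ = c then wv j₀ * Real.exp (ℓ j₀) else 0) = 0
        rw [if_neg (by tauto)]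
      rw [hG0, hT0]
      simpa using hβdnn
  have hoff : ∀ i₀ j₀, j₀ ≠ i₀ → |G i₀ j₀| ≤ βo := by
    intro i₀ j₀ hne
    by_cases hr : rsel i₀ = r
    · by_cases hc : csel j₀ = c
      · have hGo : G i₀ j₀ = M₀ * wv i₀ * (Real.exp (-A + ℓ j₀) / Dq j₀) := by
          show (if rsel i₀ = r then M₀ * wv i₀ else 0) *
              (Real.exp (A * ((if j₀ = i₀ then (1:ℝ) else 0) - 1) + ℓ j₀) / Dq j₀) *
              (if csel j₀ = c then (1:ℝ) else 0) = _
          rw [if_pos hr, if_pos hc, if_neg hne]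
          have h0 : A * ((0:ℝ) - 1) + ℓ j₀ = -A + ℓ j₀ := by ring
          rw [h0, mul_one]
        rw [hGo, abs_mul, abs_mul]
        have e1 : |M₀| = M₀ := abs_of_pos hM₀pos
        have e2 : |Real.exp (-A + ℓ j₀) / Dq j₀| = Real.exp (-A + ℓ j₀) / Dq j₀ :=
          abs_of_pos (div_pos (Real.exp_pos _) (hDpos j₀))
        rw [e1, e2]
        have key : M₀ * |wv i₀| * (Real.exp (-A + ℓ j₀) / Dq j₀)
            ≤ Wb * Real.exp (B - A) := by
          have h1 : Real.exp (-A + ℓ j₀) ≤ Real.exp (B - A) := by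
            apply Real.exp_le_exp.mpr
            have := le_trans (le_abs_self _) (hℓ j₀)
            linarith
          have h2 : M₀ * (Real.exp (-A + ℓ j₀) / Dq j₀) ≤ Real.exp (B - A) := by
            have hb : M₀ / Dq j₀ ≤ 1 := (div_le_one (hDpos j₀)).mpr (hDge j₀)
            calc M₀ * (Real.exp (-A + ℓ j₀) / Dq j₀)
                = Real.exp (-A + ℓ j₀) * (M₀ / Dq j₀) := by ring
              _ ≤ Real.exp (B - A) * 1 :=
                  mul_le_mul h1 hb (div_nonneg hM₀pos.le (hDpos j₀).le) (Real.exp_pos _).le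
              _ = Real.exp (B - A) := mul_one _
          calc M₀ * |wv i₀| * (Real.exp (-A + ℓ j₀) / Dq j₀)
              = |wv i₀| * (M₀ * (Real.exp (-A + ℓ j₀) / Dq j₀)) := by ring
            _ ≤ Wb * Real.exp (B - A) :=
                mul_le_mul (hw i₀) h2
                  (mul_nonneg hM₀pos.le (div_nonneg (Real.exp_pos _).le (hDpos j₀).le)) hWb.le
        exact key
      · have hG0 : G i₀ j₀ = 0 := by
          show _ * _ * (if csel j₀ = c then (1:ℝ) else 0) = 0
          rw [if_neg hc, mul_zero]
        rw [hG0]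
        simpa using hβonn
    · have hG0 : G i₀ j₀ = 0 := by
        show (if rsel i₀ = r then M₀ * wv i₀ else 0) * _ * _ = 0
        rw [if_neg hr, zero_mul, zero_mul]
      rw [hG0]
      simpa using hβonn
  -- assemble
  have main : |(∑ j₀ : Fin N, ∑ i₀ : Fin N, G i₀ j₀) - ∑ j₀ : Fin N, Tt j₀|
      ≤ (N:ℝ) * (βd + (N:ℝ) * βo) := by
    rw [← Finset.sum_sub_distrib]
    calc |∑ j₀ : Fin N, ((∑ i₀ : Fin N, G i₀ j₀) - Tt j₀)|
        ≤ ∑ j₀ : Fin N, |(∑ i₀ : Fin N, G i₀ j₀) - Tt j₀| :=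
          Finset.abs_sum_le_sum_abs _ _
      _ ≤ ∑ _j₀ : Fin N, (βd + (N:ℝ) * βo) := by
          apply Finset.sum_le_sum
          intro j₀ _
          have hsplit : (∑ i₀ : Fin N, G i₀ j₀)
              = G j₀ j₀ + ∑ i₀ ∈ Finset.univ.erase j₀, G i₀ j₀ :=
            (Finset.add_sum_erase _ _ (Finset.mem_univ j₀)).symm
          rw [hsplit]
          have h1 : |G j₀ j₀ + (∑ i₀ ∈ Finset.univ.erase j₀, G i₀ j₀) - Tt j₀|
              ≤ |G j₀ j₀ - Tt j₀| + |∑ i₀ ∈ Finset.univ.erase j₀, G i₀ j₀| := by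
            have : G j₀ j₀ + (∑ i₀ ∈ Finset.univ.erase j₀, G i₀ j₀) - Tt j₀
                = (G j₀ j₀ - Tt j₀) + ∑ i₀ ∈ Finset.univ.erase j₀, G i₀ j₀ := by ring
            rw [this]
            exact abs_add_le _ _
          have h2 : |∑ i₀ ∈ Finset.univ.erase j₀, G i₀ j₀| ≤ (N:ℝ) * βo := by
            calc |∑ i₀ ∈ Finset.univ.erase j₀, G i₀ j₀|
                ≤ ∑ i₀ ∈ Finset.univ.erase j₀, |G i₀ j₀| :=
                  Finset.abs_sum_le_sum_abs _ _
              _ ≤ ∑ _i₀ ∈ Finset.univ.erase j₀, βo := by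
                  apply Finset.sum_le_sum
                  intro i₀ hi₀
                  exact hoff i₀ j₀ (Finset.ne_of_mem_erase hi₀).symm
              _ = ((Finset.univ.erase j₀).card : ℝ) * βo := by
                  rw [Finset.sum_const, nsmul_eq_mul]
              _ ≤ (N:ℝ) * βo := by
                  apply mul_le_mul_of_nonneg_right _ hβonn
                  have := Finset.card_le_univ (Finset.univ.erase j₀)
                  calc ((Finset.univ.erase j₀).card : ℝ) ≤ (Fintype.card (Fin N) : ℝ) :=
                        Nat.cast_le.mpr this
                    _ = (N:ℝ) := by rw [Fintype.card_fin]
          linarith [hdiag j₀]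
      _ = (N:ℝ) * (βd + (N:ℝ) * βo) := by
          rw [Finset.sum_const, nsmul_eq_mul, Finset.card_univ, Fintype.card_fin]
  have key1 : (N:ℝ) * βd ≤ ε / 4 := by
    have hE : Real.exp (2*B) = Real.exp B * Real.exp B := by
      rw [two_mul, Real.exp_add]
    have heq : (N:ℝ) * βd = (N:ℝ)^2 * Wb * Real.exp (2*B) / M₀ := by
      rw [hβd, hE]; ring
    rw [heq]; exact hM₀e
  have key2 : (N:ℝ) * ((N:ℝ) * βo) ≤ ε / 4 := by
    have heq : (N:ℝ) * ((N:ℝ) * βo) = (N:ℝ)^2 * Wb * Real.exp (B - A) := by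
      rw [hβo]; ring
    rw [heq]
    have h4 : (0:ℝ) < 4 * (N:ℝ)^2 * Wb + 1 := by positivity
    have step : (N:ℝ)^2 * Wb * Real.exp (B - A) ≤ (N:ℝ)^2 * Wb * (ε / (4 * (N:ℝ)^2 * Wb + 1)) :=
      mul_le_mul_of_nonneg_left hAe (by positivity)
    have step2 : (N:ℝ)^2 * Wb * (ε / (4 * (N:ℝ)^2 * Wb + 1)) ≤ ε / 4 := by
      rw [mul_div_assoc', div_le_div_iff₀ h4 (by norm_num : (0:ℝ) < 4)]
      have hXnn : 0 ≤ (N:ℝ)^2 * Wb := by positivity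
      nlinarith [mul_nonneg hXnn hε.le]
    linarith
  calc |(∑ j₀ : Fin N, ∑ i₀ : Fin N, G i₀ j₀) - ∑ j₀ : Fin N, Tt j₀|
      ≤ (N:ℝ) * (βd + (N:ℝ) * βo) := main
    _ = (N:ℝ) * βd + (N:ℝ) * ((N:ℝ) * βo) := by ring
    _ ≤ ε / 4 + ε / 4 := add_le_add key1 key2
    _ = ε / 2 := by ring



def qEquiv (N d : ℕ) : Fin ((N+1) + ((N+1) + d)) ≃ (Fin (N+1) ⊕ (Fin (N+1) ⊕ Fin d)) :=
  finSumFinEquiv.symm.trans ((Equiv.refl (Fin (N+1))).sumCongr finSumFinEquiv.symm)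

lemma proj_sum {α : Type*} [Fintype α] [DecidableEq α] {m : ℕ} (q : Fin m ≃ α) (a : α)
    (F : α → ℝ) : (∑ s, (if q s = a then (1:ℝ) else 0) * F (q s)) = F a := by
  rw [Equiv.sum_comp q (fun x => (if x = a then (1:ℝ) else 0) * F x)]
  simp

def Lmat (N d : ℕ) (Um Vv : Matrix (Fin (N+1)) (Fin (N+1)) ℝ)
    (Vm : Matrix (Fin d) (Fin (N+1)) ℝ) :
    Matrix (Fin ((N+1) + ((N+1) + d))) (Fin (N+1)) ℝ :=
  Matrix.of fun s j =>
    Sum.elim (fun t => Um t j) (Sum.elim (fun t => Vv t j) (fun t => Vm t j)) (qEquiv N d s)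

def WKproj (N d : ℕ) : Matrix (Fin (N+1)) (Fin ((N+1) + ((N+1) + d))) ℝ :=
  Matrix.of fun t s => if qEquiv N d s = Sum.inl t then 1 else 0

def WQproj (N d : ℕ) : Matrix (Fin (N+1)) (Fin ((N+1) + ((N+1) + d))) ℝ :=
  Matrix.of fun t s => if qEquiv N d s = Sum.inr (Sum.inl t) then 1 else 0

def WVproj (N d : ℕ) : Matrix (Fin d) (Fin ((N+1) + ((N+1) + d))) ℝ :=
  Matrix.of fun r s => if qEquiv N d s = Sum.inr (Sum.inr r) then 1 else 0

variable {N d n : ℕ} {Um Vv : Matrix (Fin (N+1)) (Fin (N+1)) ℝ}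
  {Vm : Matrix (Fin d) (Fin (N+1)) ℝ}

lemma WK_mul : WKproj N d * Lmat N d Um Vv Vm = Um := by
  ext t j
  rw [Matrix.mul_apply]
  exact proj_sum (qEquiv N d) (Sum.inl t)
    (Sum.elim (fun u => Um u j) (Sum.elim (fun u => Vv u j) (fun u => Vm u j)))

lemma WQ_mul : WQproj N d * Lmat N d Um Vv Vm = Vv := by
  ext t j
  rw [Matrix.mul_apply]
  exact proj_sum (qEquiv N d) (Sum.inr (Sum.inl t))
    (Sum.elim (fun u => Um u j) (Sum.elim (fun u => Vv u j) (fun u => Vm u j)))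

lemma WV_mul : WVproj N d * Lmat N d Um Vv Vm = Vm := by
  ext r j
  rw [Matrix.mul_apply]
  exact proj_sum (qEquiv N d) (Sum.inr (Sum.inr r))
    (Sum.elim (fun u => Um u j) (Sum.elim (fun u => Vv u j) (fun u => Vm u j)))

/-- the value-content row where `Z`-dependence lives -/
def sstar (N d : ℕ) : Fin ((N+1) + ((N+1) + d)) :=
  (qEquiv N d).symm (Sum.inr (Sum.inl (Fin.last N)))


def Pmat (N d n : ℕ) (i : Fin (d * n)) :
    Matrix (Fin ((N+1) + ((N+1) + d))) (Fin d) ℝ :=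
  Matrix.of fun s a =>
    if s = sstar N d ∧ a = (finProdFinEquiv.symm i).1 then (1:ℝ) else 0

def Qmat (N d n : ℕ) (Cm : Fin N → Matrix (Fin d) (Fin n) ℝ) (i : Fin (d * n)) :
    Matrix (Fin n) (Fin (N+1)) ℝ :=
  Matrix.of fun b j =>
    if b = (finProdFinEquiv.symm i).2 then
      (Fin.lastCases 0
        (fun j₀ => Cm j₀ (finProdFinEquiv.symm i).1 (finProdFinEquiv.symm i).2) j)
    else 0

lemma entry_formula (Cm : Fin N → Matrix (Fin d) (Fin n) ℝ) (i : Fin (d * n))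
    (Z : Matrix (Fin d) (Fin n) ℝ) (s : Fin ((N+1) + ((N+1) + d))) (j : Fin (N+1)) :
    (Pmat N d n i * Z * Qmat N d n Cm i) s j
      = if s = sstar N d then
          Z (finProdFinEquiv.symm i).1 (finProdFinEquiv.symm i).2 *
            (Fin.lastCases 0
              (fun j₀ => Cm j₀ (finProdFinEquiv.symm i).1 (finProdFinEquiv.symm i).2) j)
        else 0 := by
  by_cases hs : s = sstar N d
  · rw [if_pos hs, Matrix.mul_apply]
    have hrow : ∀ b, (Pmat N d n i * Z) s b = Z (finProdFinEquiv.symm i).1 b := by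
      intro b
      rw [Matrix.mul_apply]
      simp only [Pmat, Matrix.of_apply, hs, true_and, ite_mul, one_mul, zero_mul]
      exact Finset.sum_ite_eq' Finset.univ _ (fun a => Z a b) |>.trans (by simp)
    simp only [hrow, Qmat, Matrix.of_apply, mul_ite, mul_zero]
    exact Finset.sum_ite_eq' Finset.univ _ _ |>.trans (by simp)
  · rw [if_neg hs, Matrix.mul_apply]
    apply Finset.sum_eq_zero
    intro b _
    rw [Matrix.mul_apply]
    have : ∀ a, (Pmat N d n i) s a * Z a b = 0 := by
      intro a
      simp [Pmat, hs]
    simp [this]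

lemma lin_eq (Cm : Fin N → Matrix (Fin d) (Fin n) ℝ) (Z : Matrix (Fin d) (Fin n) ℝ) :
    (∑ i : Fin (d * n), Pmat N d n i * Z * Qmat N d n Cm i)
        + Lmat N d Um (VvM N (fun _ => 0)) Vm
      = Lmat N d Um (VvM N (fun j₀ => ∑ a, ∑ b, Cm j₀ a b * Z a b)) Vm := by
  ext s j
  rw [Matrix.add_apply, Matrix.sum_apply]
  simp only [entry_formula]
  by_cases hs : s = sstar N d
  · subst hs
    simp only [if_true]
    have hq : qEquiv N d (sstar N d) = Sum.inr (Sum.inl (Fin.last N)) :=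
      Equiv.apply_symm_apply _ _
    induction j using Fin.lastCases with
    | last => simp [Lmat, hq, VvM]
    | cast j₀ =>
      simp only [Lmat, Matrix.of_apply, hq, Sum.elim_inr, Sum.elim_inl, VvM,
        Fin.lastCases_castSucc, Fin.lastCases_last, add_zero]
      rw [Equiv.sum_comp (finProdFinEquiv.symm)
        (fun p : Fin d × Fin n => Z p.1 p.2 * Cm j₀ p.1 p.2)]
      rw [Fintype.sum_prod_type]
      apply Finset.sum_congr rfl
      intro a _
      apply Finset.sum_congr rfl
      intro b _
      ring
  · simp only [if_neg hs, Finset.sum_const_zero, zero_add]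
    have hq : qEquiv N d s ≠ Sum.inr (Sum.inl (Fin.last N)) := by
      intro h
      exact hs (by rw [← Equiv.symm_apply_apply (qEquiv N d) s, h]; rfl)
    rcases hqs : qEquiv N d s with t | t | t
    · simp [Lmat, hqs]
    · have ht : t ≠ Fin.last N := by
        intro h; exact hq (by rw [hqs, h])
      obtain ⟨t₀, rfl⟩ : ∃ t₀ : Fin N, t = t₀.castSucc := by
        rcases Fin.eq_castSucc_or_eq_last t with h | h
        · exact h
        · exact absurd h ht
      induction j using Fin.lastCases with
      | last => simp [Lmat, hqs, VvM]
      | cast j₀ => simp [Lmat, hqs, VvM, Fin.lastCases_castSucc]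
    · simp [Lmat, hqs]


lemma bound_exists (d n Pn : ℕ) (U : Set (Matrix (Fin d) (Fin n) ℝ)) (hU : IsCompact U)
    (C : Fin d → Fin n → Fin Pn → Matrix (Fin d) (Fin n) ℝ) :
    ∃ B : ℝ, 0 ≤ B ∧ ∀ Z ∈ U, ∀ (r : Fin d) (c : Fin n) (p : Fin Pn),
      |∑ a, ∑ b, C r c p a b * Z a b| ≤ B := by
  have hcont : Continuous (fun Z : Matrix (Fin d) (Fin n) ℝ =>
      fun t : Fin d × Fin n × Fin Pn => ∑ a, ∑ b, C t.1 t.2.1 t.2.2 a b * Z a b) := by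
    apply continuous_pi
    intro t
    apply continuous_finset_sum
    intro a _
    apply continuous_finset_sum
    intro b _
    exact continuous_const.mul ((continuous_apply b).comp (continuous_apply a))
  obtain ⟨B₀, hB₀⟩ := hU.exists_bound_of_continuousOn hcont.continuousOn
  refine ⟨max B₀ 0, le_max_right _ _, fun Z hZ r c p => ?_⟩
  calc |∑ a, ∑ b, C r c p a b * Z a b|
      = ‖(fun t : Fin d × Fin n × Fin Pn =>
          ∑ a, ∑ b, C t.1 t.2.1 t.2.2 a b * Z a b) (r, c, p)‖ := rfl
    _ ≤ ‖fun t : Fin d × Fin n × Fin Pn =>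
          ∑ a, ∑ b, C t.1 t.2.1 t.2.2 a b * Z a b‖ := norm_le_pi_norm (fun t : Fin d × Fin n × Fin Pn =>
          ∑ a, ∑ b, C t.1 t.2.1 t.2.2 a b * Z a b) (r, c, p)
    _ ≤ B₀ := hB₀ Z hZ
    _ ≤ max B₀ 0 := le_max_left _ _

end AttnAux


/-- **`L∞`-norm universal approximation by single-layer, single-head self-attention.**
For any compact `U ⊂ ℝ^{d×n}`, continuous `f : U → ℝ^{d×n}`, and `ε > 0`, there exist
a sum-of-linear-transformations layer `Linear : ℝ^{d×n} → ℝ^{M₁×M₂}`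
(`Z ↦ ∑ i, P i * Z * Q i + Rb`) and a single-head self-attention layer with weights
`W_K, W_Q, W_V, W_O` such that for every `Z ∈ U`,
`‖W_V·Linear(Z)·Softmax((W_K·Linear(Z))ᵀ·(W_Q·Linear(Z)))·W_O − f(Z)‖_∞ ≤ ε`
(maximum absolute entry). -/
theorem selfattention_universal_approximation_Linf
    (d n : ℕ) (hd : 0 < d) (hn : 0 < n)
    (U : Set (Matrix (Fin d) (Fin n) ℝ)) (hU : IsCompact U)
    (f : Matrix (Fin d) (Fin n) ℝ → Matrix (Fin d) (Fin n) ℝ)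
    (hf : ContinuousOn f U)
    (ε : ℝ) (hε : 0 < ε) :
    ∃ (M₁ M₂ : ℕ) (H : ℕ)
      (P : Fin H → Matrix (Fin M₁) (Fin d) ℝ)
      (Q : Fin H → Matrix (Fin n) (Fin M₂) ℝ)
      (Rb : Matrix (Fin M₁) (Fin M₂) ℝ)
      (dA : ℕ) (WK WQ : Matrix (Fin dA) (Fin M₁) ℝ)
      (WV : Matrix (Fin d) (Fin M₁) ℝ)
      (WO : Matrix (Fin M₂) (Fin n) ℝ),
      ∀ Z ∈ U, ∀ (r : Fin d) (c : Fin n),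
        |(WV * (∑ i, P i * Z * Q i + Rb) *
            softmax ((WK * (∑ i, P i * Z * Q i + Rb))ᵀ *
              (WQ * (∑ i, P i * Z * Q i + Rb))) * WO) r c
          - f Z r c| ≤ ε := by
  obtain ⟨Pn, w, C, happrox⟩ := sw_repr_uniform d n U hU f hf (ε/2) (half_pos hε)
  obtain ⟨B, hB0, hBB⟩ := bound_exists d n Pn U hU C
  set N := d * (n * Pn) with hN
  set μ : Fin N ≃ Fin d × Fin n × Fin Pn :=
    ((Equiv.prodCongr (Equiv.refl (Fin d)) finProdFinEquiv).trans finProdFinEquiv).symm with hμ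
  set rsel : Fin N → Fin d := fun j₀ => (μ j₀).1 with hrsel
  set csel : Fin N → Fin n := fun j₀ => (μ j₀).2.1 with hcsel
  set wv : Fin N → ℝ := fun j₀ => w (μ j₀).1 (μ j₀).2.1 (μ j₀).2.2 with hwv
  set Cm : Fin N → Matrix (Fin d) (Fin n) ℝ :=
    fun j₀ => C (μ j₀).1 (μ j₀).2.1 (μ j₀).2.2 with hCm
  set Wb : ℝ := (∑ i : Fin N, |wv i|) + 1 with hWbdef
  have hWb : 0 < Wb := by
    rw [hWbdef]
    have : 0 ≤ ∑ i : Fin N, |wv i| := Finset.sum_nonneg fun i _ => abs_nonneg _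
    linarith
  have hw : ∀ i₀, |wv i₀| ≤ Wb := by
    intro i₀
    have := Finset.single_le_sum (f := fun i => |wv i|)
      (fun i _ => abs_nonneg _) (Finset.mem_univ i₀)
    rw [hWbdef]; linarith
  set A : ℝ := max 0 (B - Real.log (ε / (4 * (N:ℝ)^2 * Wb + 1))) with hAdef
  have hA : 0 ≤ A := le_max_left _ _
  have hdenpos : (0:ℝ) < 4 * (N:ℝ)^2 * Wb + 1 := by positivity
  have hAe : Real.exp (B - A) ≤ ε / (4 * (N:ℝ)^2 * Wb + 1) := by
    have hpos : 0 < ε / (4 * (N:ℝ)^2 * Wb + 1) := div_pos hε hdenpos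
    have h1 : B - Real.log (ε / (4 * (N:ℝ)^2 * Wb + 1)) ≤ A := le_max_right _ _
    have h2 : B - A ≤ Real.log (ε / (4 * (N:ℝ)^2 * Wb + 1)) := by linarith
    calc Real.exp (B - A) ≤ Real.exp (Real.log (ε / (4 * (N:ℝ)^2 * Wb + 1))) :=
          Real.exp_le_exp.mpr h2
      _ = ε / (4 * (N:ℝ)^2 * Wb + 1) := Real.exp_log hpos
  set M₀ : ℝ := 1 + 4 * (N:ℝ)^2 * Wb * Real.exp (2*B) / ε with hM₀def
  have hXnn : 0 ≤ 4 * (N:ℝ)^2 * Wb * Real.exp (2*B) / ε := div_nonneg (by positivity) hε.le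
  have hM₀ : 1 ≤ M₀ := by rw [hM₀def]; linarith
  have hM₀pos : 0 < M₀ := lt_of_lt_of_le one_pos hM₀
  have hM₀e : (N:ℝ)^2 * Wb * Real.exp (2*B) / M₀ ≤ ε / 4 := by
    rw [div_le_iff₀ hM₀pos]
    have key : ε / 4 * M₀ = ε / 4 + (N:ℝ)^2 * Wb * Real.exp (2*B) := by
      rw [hM₀def]
      field_simp
    rw [key]
    linarith
  set lM : ℝ := Real.log M₀ with hlM
  have hexplM : Real.exp lM = M₀ := Real.exp_log hM₀pos
  refine ⟨(N+1) + ((N+1) + d), N+1, d*n, Pmat N d n, Qmat N d n Cm,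
    Lmat N d (Umat N A lM) (VvM N (fun _ => 0)) (VmM N d rsel (fun i₀ => M₀ * wv i₀)),
    N+1, WKproj N d, WQproj N d, WVproj N d, WOM N n csel, ?_⟩
  intro Z hZ r c
  rw [lin_eq (Um := Umat N A lM) (Vm := VmM N d rsel (fun i₀ => M₀ * wv i₀)) Cm Z,
    WK_mul, WQ_mul, WV_mul]
  set ℓZ : Fin N → ℝ := fun j₀ => ∑ a, ∑ b, Cm j₀ a b * Z a b with hℓZ
  have hℓB : ∀ j₀, |ℓZ j₀| ≤ B := fun j₀ => hBB Z hZ _ _ _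
  rw [output_eq d n rsel csel (fun i₀ => M₀ * wv i₀) ((Umat N A lM)ᵀ * VvM N ℓZ) r c]
  have hden : ∀ j₀ : Fin N,
      (∑ k, Real.exp (((Umat N A lM)ᵀ * VvM N ℓZ) k j₀.castSucc))
        = (∑ k₀ : Fin N, Real.exp (A * ((if j₀ = k₀ then (1:ℝ) else 0) - 1) + ℓZ j₀)) + M₀ := by
    intro j₀
    rw [Fin.sum_univ_castSucc]
    simp only [S_data, S_pad]
    rw [hexplM]
  simp only [hden, S_data]
  have hTeq : (∑ j₀ : Fin N,
        (if rsel j₀ = r ∧ csel j₀ = c then wv j₀ * Real.exp (ℓZ j₀) else 0))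
      = ∑ p, w r c p * expLin (C r c p) Z := by
    have step1 : (∑ j₀ : Fin N,
          (if rsel j₀ = r ∧ csel j₀ = c then wv j₀ * Real.exp (ℓZ j₀) else 0))
        = ∑ t : Fin d × Fin n × Fin Pn,
            (if t.1 = r ∧ t.2.1 = c then
              w t.1 t.2.1 t.2.2 * Real.exp (∑ a, ∑ b, C t.1 t.2.1 t.2.2 a b * Z a b)
            else 0) :=
      Equiv.sum_comp μ (fun t : Fin d × Fin n × Fin Pn =>
        if t.1 = r ∧ t.2.1 = c then
          w t.1 t.2.1 t.2.2 * Real.exp (∑ a, ∑ b, C t.1 t.2.1 t.2.2 a b * Z a b)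
        else 0)
    rw [step1, Fintype.sum_prod_type]
    rw [Finset.sum_eq_single r
      (fun r' _ hr' => Finset.sum_eq_zero fun q _ => if_neg (by simp [hr']))
      (fun h => absurd (Finset.mem_univ r) h)]
    rw [Fintype.sum_prod_type]
    rw [Finset.sum_eq_single c
      (fun c' _ hc' => Finset.sum_eq_zero fun p _ => if_neg (by simp [hc']))
      (fun h => absurd (Finset.mem_univ c) h)]
    apply Finset.sum_congr rfl
    intro p _
    rw [if_pos ⟨rfl, rfl⟩]
    rfl
  have hmain := attn_error N d n r c rsel csel wv ℓZ A B M₀ Wb ε hε hA hM₀ hWb hB0 hℓB hw hAe hM₀e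
  rw [hTeq] at hmain
  have happ := happrox Z hZ r c
  refine le_trans (abs_sub_le _ (∑ p, w r c p * expLin (C r c p) Z) _) ?_
  have : ε / 2 + ε / 2 = ε := by ring
  linarith [hmain, happ]
end

section
/- Let d, n be positive integers, L > 0, ε > 0, and let f : 𝒳 → ℝ^{d×n} be L-Lipschitz with respect to the entrywise Euclidean (Frobenius) norm, where 𝒳 ⊆ ℝ^{d×n}. Suppose 𝒳 is contained in the union of N_x closed Euclidean balls of radius ε/(3L), and suppose f admits an L-Lipschitz extension to the ball centers (e.g. f is the restriction of an L-Lipschitz function defined on all of ℝ^{d×n}). Then there exist a sum-of-linear-transformations layer Linear and a single-head self-attention layer Attn (with weight matrices of suitable dimensions, the attention hidden width proportional to d·N_x) such that for every Z ∈ 𝒳: ‖Attn(Linear(Z)) − f(Z)‖_∞ ≤ ε. -/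
open Matrix

/-- Frobenius (entrywise Euclidean) norm of a real matrix. -/
noncomputable def frob {a b : ℕ} (M : Matrix (Fin a) (Fin b) ℝ) : ℝ :=
  Real.sqrt (∑ r, ∑ c, M r c ^ 2)

/-!
Write `D_i = ‖Z - C_i‖_F` for the distances to the centres `C_i`. The linear layer puts the scores
`β ⟪Z, C_i⟫ - β ‖C_i‖² / 2 = β (‖Z‖² - D_i²) / 2` into an extra row, and the attention layer turns
them into the Gibbs average `∑ᵢ softmax(-β D²/2)_i f(C_i)`. Since `|f(C_i) - f(Z)| ≤ L D_i`, centres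
with `D_i ≤ 2ε/(3L)` contribute at most `2ε/3`, while, compared with a centre at distance
`≤ ε/(3L)`, every farther centre has relative weight `exp(-3βD_i²/8)`, which for
`β = 12 N L²/ε²` beats the factor `L D_i` by `ε/(3N)`.

The attention matrix must realise this average exactly although softmax weights are all positive.
This is why every centre gets `2d` key slots: each query sees each centre with total weight one,
and the values `±e_r` on paired slots cancel everything except a perturbation of the mixing
weights at the query's own centre and row.
-/

namespace AttentionApprox

open Real

section Frobenius

variable {a b : ℕ}

lemma frob_sq (M : Matrix (Fin a) (Fin b) ℝ) : frob M ^ 2 = ∑ r, ∑ c, M r c ^ 2 :=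
  sq_sqrt (Finset.sum_nonneg fun _ _ => Finset.sum_nonneg fun _ _ => sq_nonneg _)

lemma frob_nonneg (M : Matrix (Fin a) (Fin b) ℝ) : 0 ≤ frob M := sqrt_nonneg _

lemma abs_apply_le_frob (M : Matrix (Fin a) (Fin b) ℝ) (r : Fin a) (c : Fin b) :
    |M r c| ≤ frob M := by
  rw [← sqrt_sq_eq_abs]
  refine sqrt_le_sqrt ?_
  calc M r c ^ 2 ≤ ∑ c', M r c' ^ 2 :=
        Finset.single_le_sum (fun _ _ => sq_nonneg _) (Finset.mem_univ c)
    _ ≤ ∑ r', ∑ c', M r' c' ^ 2 :=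
        Finset.single_le_sum (f := fun r' => ∑ c', M r' c' ^ 2)
          (fun _ _ => Finset.sum_nonneg fun _ _ => sq_nonneg _) (Finset.mem_univ r)

lemma frob_sub_sq (A B : Matrix (Fin a) (Fin b) ℝ) :
    frob (A - B) ^ 2 = frob A ^ 2 - 2 * ∑ r, ∑ c, A r c * B r c + frob B ^ 2 := by
  simp only [frob_sq, Matrix.sub_apply, sub_sq, Finset.sum_add_distrib, Finset.sum_sub_distrib,
    Finset.mul_sum, mul_assoc]

end Frobenius

section GibbsAverage

lemma abs_sum_div_mul_sub_le {ι : Type*} [Fintype ι] (w y : ι → ℝ) (x : ℝ)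
    (hw : ∀ i, 0 ≤ w i) (hS : 0 < ∑ i, w i) :
    |∑ i, w i / (∑ j, w j) * y i - x| ≤ (∑ i, w i * |y i - x|) / ∑ i, w i := by
  have hsum : ∑ i, w i / (∑ j, w j) = 1 := by rw [← Finset.sum_div, div_self hS.ne']
  calc |∑ i, w i / (∑ j, w j) * y i - x| = |∑ i, w i / (∑ j, w j) * (y i - x)| := by
        simp only [mul_sub, Finset.sum_sub_distrib, ← Finset.sum_mul, hsum, one_mul]
    _ ≤ ∑ i, |w i / (∑ j, w j) * (y i - x)| := Finset.abs_sum_le_sum_abs _ _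
    _ = (∑ i, w i * |y i - x|) / ∑ i, w i := by
        rw [Finset.sum_div]
        refine Finset.sum_congr rfl fun i _ => ?_
        rw [abs_mul, abs_of_nonneg (div_nonneg (hw i) hS.le)]
        ring

variable {L ε β δ : ℝ}

lemma mul_mul_exp_neg_le (hL : 0 < L) (hε : 0 < ε) (hδ : 0 < δ) (hβ : 4 * L ^ 2 / (ε * δ) ≤ β)
    {D : ℝ} (hD : 2 * (ε / (3 * L)) < D) : L * D * exp (-(3 * β / 8 * D ^ 2)) ≤ δ := by
  have hD0 : 0 < D := lt_trans (by positivity) hD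
  set t := 3 * β / 8 * D ^ 2
  have hβδ : 4 * L ^ 2 / ε ≤ β * δ := by
    rw [div_le_iff₀ (by positivity)] at hβ
    rw [div_le_iff₀ hε]
    linarith
  have hεLD : 2 * ε ≤ 3 * L * D := by
    rw [← mul_div_assoc, div_lt_iff₀ (by positivity)] at hD
    linarith
  have hLD : L * D ≤ δ * t := calc
    L * D ≤ L * D * (3 * L * D / (2 * ε)) :=
      le_mul_of_one_le_right (by positivity) ((one_le_div (by positivity)).2 hεLD)
    _ = 3 * D ^ 2 / 8 * (4 * L ^ 2 / ε) := by field_simp; ring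
    _ ≤ 3 * D ^ 2 / 8 * (β * δ) := by gcongr
    _ = δ * t := by ring
  calc L * D * exp (-t) ≤ δ * (t * exp (-t)) := by
        rw [← mul_assoc]; exact mul_le_mul_of_nonneg_right hLD (exp_pos _).le
    _ ≤ δ * 1 := by
        gcongr
        exact (mul_exp_neg_le_exp_neg_one t).trans (exp_le_one_iff.2 (by norm_num))
    _ = δ := mul_one δ

lemma exp_mul_abs_sub_le (hL : 0 < L) (hε : 0 < ε) (hδ : 0 < δ) (hβ : 4 * L ^ 2 / (ε * δ) ≤ β)
    {K D D₀ y x : ℝ} (hy : |y - x| ≤ L * D) (hD₀ : 0 ≤ D₀) (hD₀ε : D₀ ≤ ε / (3 * L)) :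
    exp (K - β * D ^ 2 / 2) * |y - x| ≤
      2 * ε / 3 * exp (K - β * D ^ 2 / 2) + δ * exp (K - β * D₀ ^ 2 / 2) := by
  have hδe₀ : 0 ≤ δ * exp (K - β * D₀ ^ 2 / 2) := by positivity
  rcases le_or_gt D (2 * (ε / (3 * L))) with hnear | hfar
  · have hyx : |y - x| ≤ 2 * ε / 3 := calc
      |y - x| ≤ L * (2 * (ε / (3 * L))) := hy.trans (by gcongr)
      _ = 2 * ε / 3 := by field_simp
    have := mul_le_mul_of_nonneg_left hyx (exp_pos (K - β * D ^ 2 / 2)).le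
    linarith
  · have hβ0 : 0 ≤ β := le_trans (by positivity) hβ
    have hD₀D : 4 * D₀ ^ 2 ≤ D ^ 2 := by nlinarith
    have hexp : exp (K - β * D ^ 2 / 2) ≤
        exp (K - β * D₀ ^ 2 / 2) * exp (-(3 * β / 8 * D ^ 2)) := by
      rw [← exp_add]
      gcongr
      nlinarith
    calc exp (K - β * D ^ 2 / 2) * |y - x|
        ≤ exp (K - β * D₀ ^ 2 / 2) * exp (-(3 * β / 8 * D ^ 2)) * (L * D) := by gcongr
      _ = exp (K - β * D₀ ^ 2 / 2) * (L * D * exp (-(3 * β / 8 * D ^ 2))) := by ring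
      _ ≤ exp (K - β * D₀ ^ 2 / 2) * δ := by gcongr; exact mul_mul_exp_neg_le hL hε hδ hβ hfar
      _ ≤ _ := by
        have := mul_nonneg (by positivity : (0 : ℝ) ≤ 2 * ε / 3) (exp_pos (K - β * D ^ 2 / 2)).le
        linarith

theorem abs_gibbs_average_sub_le {N : ℕ} (hL : 0 < L) (hε : 0 < ε)
    (hβ : 12 * N * L ^ 2 / ε ^ 2 ≤ β) {K x : ℝ} {D y α : Fin N → ℝ}
    (hα : ∀ i, α i = K - β * D i ^ 2 / 2) (hy : ∀ i, |y i - x| ≤ L * D i) {i₀ : Fin N}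
    (hD₀ : 0 ≤ D i₀) (hD₀ε : D i₀ ≤ ε / (3 * L)) :
    |∑ i, exp (α i) / (∑ j, exp (α j)) * y i - x| ≤ ε := by
  have hN : (0 : ℝ) < N := Nat.cast_pos.2 i₀.pos
  have hS : 0 < ∑ j, exp (α j) := Finset.sum_pos (fun _ _ => exp_pos _) ⟨i₀, Finset.mem_univ _⟩
  have hβ' : 4 * L ^ 2 / (ε * (ε / (3 * N))) ≤ β := by
    convert hβ using 1
    field_simp
    ring
  refine (abs_sum_div_mul_sub_le _ _ _ (fun _ => (exp_pos _).le) hS).trans ?_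
  rw [div_le_iff₀ hS]
  calc ∑ i, exp (α i) * |y i - x|
      ≤ ∑ i, (2 * ε / 3 * exp (α i) + ε / (3 * N) * exp (α i₀)) :=
        Finset.sum_le_sum fun i _ => by
          rw [hα, hα]
          exact exp_mul_abs_sub_le hL hε (by positivity) hβ' (hy i) hD₀ hD₀ε
    _ = 2 * ε / 3 * ∑ i, exp (α i) + ε / 3 * exp (α i₀) := by
        rw [Finset.sum_add_distrib, ← Finset.mul_sum, Finset.sum_const, Finset.card_univ,
          Fintype.card_fin, nsmul_eq_mul]
        field_simp
    _ ≤ 2 * ε / 3 * ∑ i, exp (α i) + ε / 3 * ∑ i, exp (α i) := by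
        gcongr
        exact Finset.single_le_sum (fun _ _ => (exp_pos _).le) (Finset.mem_univ i₀)
    _ = ε * ∑ i, exp (α i) := by ring

end GibbsAverage

section Attention

variable {m d n : ℕ}

def augment (a : Fin m → ℝ) : Matrix (Fin (m + 1)) (Fin m) ℝ :=
  of (vecCons a (1 : Matrix (Fin m) (Fin m) ℝ))

def valueHead (V : Matrix (Fin d) (Fin m) ℝ) : Matrix (Fin d) (Fin (m + 1)) ℝ :=
  of fun r => vecCons 0 (V r)

noncomputable def queryHead (U : Matrix (Fin m) (Fin m) ℝ) :
    Matrix (Fin (m + 1)) (Fin (m + 1)) ℝ :=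
  of (vecCons (vecCons 0 1) fun k => vecCons 0 fun j => log (U j k))

@[simp] lemma augment_zero (a : Fin m → ℝ) (k : Fin m) : augment a 0 k = a k := rfl

@[simp] lemma augment_succ (a : Fin m → ℝ) (k' k : Fin m) :
    augment a k'.succ k = (1 : Matrix (Fin m) (Fin m) ℝ) k' k := rfl

lemma sum_single_mul_mul_add_augment {H : ℕ} (Z : Matrix (Fin H) (Fin n) ℝ)
    (Q : Fin H → Matrix (Fin n) (Fin m) ℝ) (b : Fin m → ℝ) :
    ∑ a, single (0 : Fin (m + 1)) a (1 : ℝ) * Z * Q a + augment b =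
      augment fun k => b k + ∑ a, (Z * Q a) a k := by
  ext p k
  induction p using Fin.cases with
  | zero => simp [Matrix.mul_assoc, Matrix.sum_apply, single_mul_apply_same, add_comm]
  | succ p =>
    simp [Matrix.mul_assoc, Matrix.sum_apply, single_mul_apply_of_ne _ _ _ _ _ (Fin.succ_ne_zero p)]

lemma valueHead_mul_augment (V : Matrix (Fin d) (Fin m) ℝ) (a : Fin m → ℝ) :
    valueHead V * augment a = V := by
  ext r k
  simp [mul_apply, Fin.sum_univ_succ, valueHead, one_apply]

lemma augment_transpose_mul_queryHead_mul_augment (U : Matrix (Fin m) (Fin m) ℝ)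
    (a : Fin m → ℝ) :
    (augment a)ᵀ * (queryHead U * augment a) = of fun k j => a k + log (U j k) := by
  ext k j
  simp [mul_apply, Fin.sum_univ_succ, queryHead, one_apply, vecMul, dotProduct]

lemma softmax_add_log (a : Fin m → ℝ) (U : Matrix (Fin m) (Fin m) ℝ)
    (hU : ∀ j k, 0 < U j k) :
    softmax (of fun k j => a k + log (U j k)) =
      of fun k j => exp (a k) * U j k / ∑ k', exp (a k') * U j k' := by
  ext k j
  simp [softmax, exp_add, exp_log (hU _ _)]

end Attention

section Slots

variable {d N n : ℕ}

/-- Centre `i` owns the `2d` slots `((s, r), i)`; slot `((0, r), i)` carries the value `e_r` and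
slot `((1, r), i)` the value `-e_r`. -/
abbrev Slot (d N : ℕ) := (Fin 2 × Fin d) × Fin N

def slotValue (d N : ℕ) : Matrix (Fin d) (Slot d N) ℝ :=
  of fun r k => if k.1.2 = r then ![1, -1] k.1.1 else 0

noncomputable def slotMixing (d N : ℕ) : Matrix (Slot d N) (Slot d N) ℝ :=
  of fun j k => (2 + if k.2 = j.2 ∧ k.1.2 = j.1.2 then ![1, -1] k.1.1 else 0) / (4 * d)

def slotOutput (F : Fin N → Matrix (Fin d) (Fin n) ℝ) : Matrix (Slot d N) (Fin n) ℝ :=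
  of fun j c => d * F j.2 j.1.2 c

noncomputable def slotAttention (d : ℕ) (p : Fin N → ℝ) : Matrix (Slot d N) (Slot d N) ℝ :=
  of fun k j => p k.2 * slotMixing d N j k

lemma slotMixing_pos (j k : Slot d N) : 0 < slotMixing d N j k := by
  obtain ⟨⟨s, r⟩, i⟩ := k
  simp only [slotMixing, of_apply]
  split_ifs
  · fin_cases s <;> norm_num [r.pos]
  · norm_num [r.pos]

lemma sum_slotMixing (j : Slot d N) (i : Fin N) : ∑ t, slotMixing d N j (t, i) = 1 := by
  rw [Fintype.sum_prod_type, Fin.sum_univ_two, ← Finset.sum_add_distrib]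
  have hd : (d : ℝ) ≠ 0 := by exact_mod_cast j.1.2.pos.ne'
  calc _ = ∑ _r : Fin d, (d : ℝ)⁻¹ := by
          refine Finset.sum_congr rfl fun r _ => ?_
          simp only [slotMixing, of_apply]
          split_ifs <;> field_simp <;> norm_num
    _ = 1 := by simp [hd]

lemma sum_mul_slotMixing (g : Fin N → ℝ) (j : Slot d N) :
    ∑ k, g k.2 * slotMixing d N j k = ∑ i, g i := by
  rw [Fintype.sum_prod_type, Finset.sum_comm]
  simp [← Finset.mul_sum, sum_slotMixing]

lemma slotValue_mul_slotAttention (p : Fin N → ℝ) (r : Fin d) (j : Slot d N) :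
    (slotValue d N * slotAttention d p) r j = if r = j.1.2 then p j.2 / (2 * d) else 0 := by
  have hd : (d : ℝ) ≠ 0 := by exact_mod_cast r.pos.ne'
  simp only [mul_apply, slotValue, slotAttention, slotMixing, of_apply, Fintype.sum_prod_type,
    Fin.sum_univ_two, cons_val_zero, cons_val_one, cons_val_fin_one, ite_mul, one_mul, neg_mul,
    zero_mul, Finset.sum_ite_irrel, Finset.sum_const_zero, Finset.sum_ite_eq', Finset.mem_univ,
    if_true, Finset.sum_neg_distrib]
  rw [← sub_eq_add_neg, ← Finset.sum_sub_distrib]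
  calc _ = ∑ i, if i = j.2 then (if r = j.1.2 then p i / (2 * d) else 0) else 0 :=
        Finset.sum_congr rfl fun i _ => by
          by_cases hi : i = j.2 <;> by_cases hr : r = j.1.2 <;>
            simp only [hi, hr, and_self, and_true, and_false, if_true, if_false, add_zero,
              sub_self]
          field_simp
          ring
    _ = _ := by simp

lemma slotValue_mul_slotAttention_mul_slotOutput (p : Fin N → ℝ)
    (F : Fin N → Matrix (Fin d) (Fin n) ℝ) (r : Fin d) (c : Fin n) :
    (slotValue d N * slotAttention d p * slotOutput F) r c = ∑ i, p i * F i r c := by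
  have hd : (d : ℝ) ≠ 0 := by exact_mod_cast r.pos.ne'
  rw [mul_apply]
  simp only [slotValue_mul_slotAttention, slotOutput, of_apply, Fintype.sum_prod_type,
    Fin.sum_univ_two, ite_mul, zero_mul]
  rw [← two_mul, Finset.sum_comm, Finset.mul_sum]
  refine Finset.sum_congr rfl fun i _ => ?_
  rw [Finset.sum_ite_eq]
  simp only [Finset.mem_univ, if_true]
  field_simp

lemma attention_slot_apply {m : ℕ} (e : Fin m ≃ Slot d N) (α : Fin N → ℝ)
    (F : Fin N → Matrix (Fin d) (Fin n) ℝ) (r : Fin d) (c : Fin n) :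
    (valueHead ((slotValue d N).submatrix id e) * augment (fun k => α (e k).2) *
        softmax ((augment fun k => α (e k).2)ᵀ *
          (queryHead ((slotMixing d N).submatrix e e) * augment fun k => α (e k).2)) *
        (slotOutput F).submatrix e id) r c =
      ∑ i, exp (α i) / (∑ i', exp (α i')) * F i r c := by
  have hsoftmax : (of fun k j => exp (α (e k).2) * (slotMixing d N).submatrix e e j k /
      ∑ k', exp (α (e k').2) * (slotMixing d N).submatrix e e j k') =
        (slotAttention d fun i => exp (α i) / ∑ i', exp (α i')).submatrix e e := by
    ext k j
    simp only [of_apply, submatrix_apply, slotAttention]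
    rw [Equiv.sum_comp e fun k => exp (α k.2) * slotMixing d N (e j) k,
      sum_mul_slotMixing (fun i => exp (α i))]
    ring
  rw [valueHead_mul_augment, augment_transpose_mul_queryHead_mul_augment,
    softmax_add_log _ ((slotMixing d N).submatrix e e) fun _ _ => slotMixing_pos _ _, hsoftmax,
    submatrix_mul_equiv, submatrix_mul_equiv, submatrix_apply,
    slotValue_mul_slotAttention_mul_slotOutput]
  rfl

def slotEquiv (d N : ℕ) : Fin (2 * d * N) ≃ Slot d N :=
  finProdFinEquiv.symm.trans (finProdFinEquiv.symm.prodCongr (Equiv.refl _))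

end Slots

end AttentionApprox

open AttentionApprox in
theorem lipschitz_small_domain_attention_approximation_general
    (d n : ℕ)
    (L ε : ℝ) (hL : 0 < L) (hε : 0 < ε)
    (𝒳 : Set (Matrix (Fin d) (Fin n) ℝ))
    (f : Matrix (Fin d) (Fin n) ℝ → Matrix (Fin d) (Fin n) ℝ)
    (hfLip : ∀ Z₁ Z₂ : Matrix (Fin d) (Fin n) ℝ, frob (f Z₁ - f Z₂) ≤ L * frob (Z₁ - Z₂))
    (Nx : ℕ)
    (centers : Fin Nx → Matrix (Fin d) (Fin n) ℝ)
    (hcover : 𝒳 ⊆ ⋃ i : Fin Nx, {Z | frob (Z - centers i) ≤ ε / (3 * L)}) :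
    ∃ (H : ℕ) (P : Fin H → Matrix (Fin (2 * d * Nx + 1)) (Fin d) ℝ)
      (Q : Fin H → Matrix (Fin n) (Fin (2 * d * Nx)) ℝ)
      (Rb : Matrix (Fin (2 * d * Nx + 1)) (Fin (2 * d * Nx)) ℝ)
      (dA : ℕ) (WK WQ : Matrix (Fin dA) (Fin (2 * d * Nx + 1)) ℝ)
      (WV : Matrix (Fin d) (Fin (2 * d * Nx + 1)) ℝ)
      (WO : Matrix (Fin (2 * d * Nx)) (Fin n) ℝ),
      ∀ Z ∈ 𝒳, ∀ (r : Fin d) (c : Fin n),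
        |(WV * (∑ i, P i * Z * Q i + Rb) *
            softmax ((WK * (∑ i, P i * Z * Q i + Rb))ᵀ *
              (WQ * (∑ i, P i * Z * Q i + Rb))) * WO) r c
          - f Z r c| ≤ ε := by
  set β := 12 * Nx * L ^ 2 / ε ^ 2
  set e := slotEquiv d Nx
  refine ⟨d, fun a => single 0 a 1, fun a => of fun c k => β * centers (e k).2 a c,
    augment fun k => -(β * frob (centers (e k).2) ^ 2 / 2), _, 1,
    queryHead ((slotMixing d Nx).submatrix e e), valueHead ((slotValue d Nx).submatrix id e),
    (slotOutput fun i => f (centers i)).submatrix e id, ?_⟩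
  intro Z hZ r c
  obtain ⟨i₀, hi₀⟩ := Set.mem_iUnion.1 (hcover hZ)
  set α : Fin Nx → ℝ := fun i => β * frob Z ^ 2 / 2 - β * frob (Z - centers i) ^ 2 / 2
  have hY : ∑ a, single (0 : Fin (2 * d * Nx + 1)) a (1 : ℝ) * Z *
        (of fun c k => β * centers (e k).2 a c : Matrix (Fin n) (Fin (2 * d * Nx)) ℝ) +
      augment (fun k => -(β * frob (centers (e k).2) ^ 2 / 2)) = augment fun k => α (e k).2 := by
    rw [sum_single_mul_mul_add_augment]
    congr 1
    funext k
    simp only [α, frob_sub_sq, mul_apply, of_apply, mul_left_comm _ β, ← Finset.mul_sum]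
    ring
  have hf : ∀ i, |f (centers i) r c - f Z r c| ≤ L * frob (Z - centers i) := fun i => by
    rw [abs_sub_comm]
    exact (abs_apply_le_frob (f Z - f (centers i)) r c).trans (hfLip _ _)
  rw [Matrix.one_mul, hY, attention_slot_apply]
  exact abs_gibbs_average_sub_le hL hε le_rfl (fun _ => rfl) hf (frob_nonneg _) hi₀

/-- **Approximation of Lipschitz functions on small domains by single-head attention.**
Let `f : ℝ^{d×n} → ℝ^{d×n}` be `L`-Lipschitz in Frobenius norm (an `L`-Lipschitz
extension of the target to all of `ℝ^{d×n}`, as hypothesized), and suppose the domain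
`𝒳` is contained in the union of `N_x` closed Frobenius balls of radius `ε/(3L)`.
Then there are a sum-of-linear-transformations layer
`Linear : ℝ^{d×n} → ℝ^{(2dN_x+1)×2dN_x}` and a single-head self-attention layer
(hidden width proportional to `d·N_x`) with weights `W_K, W_Q, W_V, W_O` such that
for every `Z ∈ 𝒳` the attention output is entrywise within `ε` of `f(Z)`. -/
theorem lipschitz_small_domain_attention_approximation
    (d n : ℕ) (hd : 0 < d) (hn : 0 < n)
    (L ε : ℝ) (hL : 0 < L) (hε : 0 < ε)
    (𝒳 : Set (Matrix (Fin d) (Fin n) ℝ))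
    (f : Matrix (Fin d) (Fin n) ℝ → Matrix (Fin d) (Fin n) ℝ)
    (hfLip : ∀ Z₁ Z₂ : Matrix (Fin d) (Fin n) ℝ, frob (f Z₁ - f Z₂) ≤ L * frob (Z₁ - Z₂))
    (Nx : ℕ) (hNx : 0 < Nx)
    (centers : Fin Nx → Matrix (Fin d) (Fin n) ℝ)
    (hcover : 𝒳 ⊆ ⋃ i : Fin Nx, {Z | frob (Z - centers i) ≤ ε / (3 * L)}) :
    ∃ (H : ℕ) (P : Fin H → Matrix (Fin (2 * d * Nx + 1)) (Fin d) ℝ)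
      (Q : Fin H → Matrix (Fin n) (Fin (2 * d * Nx)) ℝ)
      (Rb : Matrix (Fin (2 * d * Nx + 1)) (Fin (2 * d * Nx)) ℝ)
      (dA : ℕ) (WK WQ : Matrix (Fin dA) (Fin (2 * d * Nx + 1)) ℝ)
      (WV : Matrix (Fin d) (Fin (2 * d * Nx + 1)) ℝ)
      (WO : Matrix (Fin (2 * d * Nx)) (Fin n) ℝ),
      ∀ Z ∈ 𝒳, ∀ (r : Fin d) (c : Fin n),
        |(WV * (∑ i, P i * Z * Q i + Rb) *
            softmax ((WK * (∑ i, P i * Z * Q i + Rb))ᵀ *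
              (WQ * (∑ i, P i * Z * Q i + Rb))) * WO) r c
          - f Z r c| ≤ ε :=
  lipschitz_small_domain_attention_approximation_general d n L ε hL hε 𝒳 f hfLip Nx centers hcover
end
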